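/- arXiv:2410.21138 — 11 statements merged into one kernel-verified Lean document; each statement's English description precedes it below -/
import Mathlib

section
/- Assume moreover that 2p ≤ n−2 and that there exists ε ∈ (0,R] with ψ(r) > 0 for all r ∈ (0,ε). Then ψ(r) > 0 and ψ'(r) > 0 for all r ∈ (0,R]. -/
open Set

/-!
Put `k = n - 2p - 1 ≥ 1`. The ODE says exactly that `(h^k ψ')' = λ h^(k-2) ψ`, so `h^k ψ'` is
nondecreasing on every interval where `ψ ≥ 0`. Since `ψ(0) = 0` and `ψ > 0` near `0`, the mean
value theorem gives points `ξ` arbitrarily close to `0` with `ψ(ξ) > 0` and `ψ'(ξ) > 0`. From such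
a `ξ`, `ψ'` stays positive as long as `ψ` does, so `ψ` increases and can never reach its first
zero; hence `ψ > 0` on `[ξ, R]`, and then `h^k ψ' ≥ h(ξ)^k ψ'(ξ) > 0` there.
-/

lemma monotoneOn_Icc_of_hasDerivAt_nonneg {f f' : ℝ → ℝ} {a b : ℝ}
    (hf : ContinuousOn f (Icc a b)) (hf' : ∀ x ∈ Ioo a b, HasDerivAt f (f' x) x)
    (hf'₀ : ∀ x ∈ Ioo a b, 0 ≤ f' x) : MonotoneOn f (Icc a b) :=
  monotoneOn_of_hasDerivWithinAt_nonneg (convex_Icc a b) hf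
    (fun x hx ↦ (hf' x (by rwa [interior_Icc] at hx)).hasDerivWithinAt)
    (fun x hx ↦ hf'₀ x (by rwa [interior_Icc] at hx))

lemma ContinuousOn.exists_first_nonpos {f : ℝ → ℝ} {a b : ℝ} (hf : ContinuousOn f (Icc a b))
    (hab : a ≤ b) (hb : f b ≤ 0) : ∃ c ∈ Icc a b, f c ≤ 0 ∧ ∀ x ∈ Ico a c, 0 < f x := by
  have hZ : IsCompact {x ∈ Icc a b | f x ≤ 0} := isCompact_Icc.of_isClosed_subset
    (hf.preimage_isClosed_of_isClosed isClosed_Icc isClosed_Iic) fun _ hx ↦ hx.1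
  obtain ⟨c, ⟨hc, hfc⟩, hleast⟩ := hZ.exists_isLeast ⟨b, ⟨hab, le_rfl⟩, hb⟩
  refine ⟨c, hc, hfc, fun x hx ↦ not_le.1 fun hfx ↦ ?_⟩
  exact (hleast ⟨⟨hx.1, hx.2.le.trans hc.2⟩, hfx⟩).not_gt hx.2

lemma exists_pos_and_deriv_pos_of_eq_zero {f f' : ℝ → ℝ} {b : ℝ} (hb : 0 < b)
    (hf : ContinuousOn f (Icc 0 b)) (hf' : ∀ x ∈ Ioo 0 b, HasDerivAt f (f' x) x)
    (hf0 : f 0 = 0) (hfpos : ∀ x ∈ Ioc 0 b, 0 < f x) :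
    ∃ ξ ∈ Ioo 0 b, 0 < f ξ ∧ 0 < f' ξ := by
  obtain ⟨ξ, hξ, hslope⟩ := exists_hasDerivAt_eq_slope f f' hb hf hf'
  refine ⟨ξ, hξ, hfpos ξ ⟨hξ.1, hξ.2.le⟩, ?_⟩
  rw [hslope, hf0, sub_zero, sub_zero]
  exact div_pos (hfpos b ⟨hb, le_rfl⟩) hb

structure IsRadialSolution (k : ℕ) (L a b : ℝ) (h h' ψ ψ' ψ'' : ℝ → ℝ) : Prop where
  continuousOn_h : ContinuousOn h (Icc a b)
  continuousOn_ψ : ContinuousOn ψ (Icc a b)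
  continuousOn_ψ' : ContinuousOn ψ' (Icc a b)
  hasDerivAt_h : ∀ x ∈ Ioo a b, HasDerivAt h (h' x) x
  hasDerivAt_ψ : ∀ x ∈ Ioo a b, HasDerivAt ψ (ψ' x) x
  hasDerivAt_ψ' : ∀ x ∈ Ioo a b, HasDerivAt ψ' (ψ'' x) x
  h_pos : ∀ x ∈ Ioc a b, 0 < h x
  ode : ∀ x ∈ Ioc a b, ψ'' x + k * (h' x / h x) * ψ' x - L * ψ x / h x ^ 2 = 0

lemma hasDerivAt_pow_mul_of_ode {h ψ' : ℝ → ℝ} {h'x ψx ψ''x L x : ℝ} {k : ℕ}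
    (hh : HasDerivAt h h'x x) (hψ' : HasDerivAt ψ' ψ''x x) (hx : h x ≠ 0)
    (hode : ψ''x + k * (h'x / h x) * ψ' x - L * ψx / h x ^ 2 = 0) :
    HasDerivAt (fun r ↦ h r ^ k * ψ' r) (L * ψx * h x ^ k / h x ^ 2) x := by
  refine ((hh.pow k).mul hψ').congr_deriv ?_
  rw [eq_div_iff (pow_ne_zero 2 hx)]
  field_simp at hode
  simp only [Pi.pow_apply]
  rcases k with _ | k
  · simp only [CharP.cast_eq_zero, zero_mul] at hode ⊢
    linear_combination hode
  · push_cast at hode ⊢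
    linear_combination h x ^ (k + 1) * hode

namespace IsRadialSolution

variable {k : ℕ} {L a b : ℝ} {h h' ψ ψ' ψ'' : ℝ → ℝ}

lemma mono (hs : IsRadialSolution k L a b h h' ψ ψ' ψ'') {c d : ℝ} (hac : a ≤ c) (hdb : d ≤ b) :
    IsRadialSolution k L c d h h' ψ ψ' ψ'' where
  continuousOn_h := hs.continuousOn_h.mono (Icc_subset_Icc hac hdb)
  continuousOn_ψ := hs.continuousOn_ψ.mono (Icc_subset_Icc hac hdb)
  continuousOn_ψ' := hs.continuousOn_ψ'.mono (Icc_subset_Icc hac hdb)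
  hasDerivAt_h x hx := hs.hasDerivAt_h x (Ioo_subset_Ioo hac hdb hx)
  hasDerivAt_ψ x hx := hs.hasDerivAt_ψ x (Ioo_subset_Ioo hac hdb hx)
  hasDerivAt_ψ' x hx := hs.hasDerivAt_ψ' x (Ioo_subset_Ioo hac hdb hx)
  h_pos x hx := hs.h_pos x (Ioc_subset_Ioc hac hdb hx)
  ode x hx := hs.ode x (Ioc_subset_Ioc hac hdb hx)

lemma monotoneOn_pow_mul_deriv (hs : IsRadialSolution k L a b h h' ψ ψ' ψ'') (hL : 0 ≤ L)
    (hψ : ∀ x ∈ Ioo a b, 0 ≤ ψ x) : MonotoneOn (fun r ↦ h r ^ k * ψ' r) (Icc a b) := by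
  refine monotoneOn_Icc_of_hasDerivAt_nonneg ((hs.continuousOn_h.pow k).mul hs.continuousOn_ψ')
    (fun x hx ↦ hasDerivAt_pow_mul_of_ode (hs.hasDerivAt_h x hx) (hs.hasDerivAt_ψ' x hx)
      (hs.h_pos x (Ioo_subset_Ioc_self hx)).ne' (hs.ode x (Ioo_subset_Ioc_self hx))) fun x hx ↦ ?_
  have := hs.h_pos x (Ioo_subset_Ioc_self hx)
  have := hψ x hx
  positivity

lemma ψ'_pos (hs : IsRadialSolution k L a b h h' ψ ψ' ψ'') (hL : 0 ≤ L)
    (hψ : ∀ x ∈ Ioo a b, 0 ≤ ψ x) (ha : 0 < h a) (hψ'a : 0 < ψ' a) :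
    ∀ x ∈ Icc a b, 0 < ψ' x := by
  intro x hx
  have hhx : 0 < h x := hx.1.eq_or_lt.elim (· ▸ ha) fun hax ↦ hs.h_pos x ⟨hax, hx.2⟩
  have hg : h a ^ k * ψ' a ≤ h x ^ k * ψ' x :=
    hs.monotoneOn_pow_mul_deriv hL hψ ⟨le_rfl, hx.1.trans hx.2⟩ hx hx.1
  exact pos_of_mul_pos_right ((by positivity : 0 < h a ^ k * ψ' a).trans_le hg) (by positivity)

lemma ψ_pos (hs : IsRadialSolution k L a b h h' ψ ψ' ψ'') (hL : 0 ≤ L) (ha : 0 < h a)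
    (hψa : 0 < ψ a) (hψ'a : 0 < ψ' a) : ∀ x ∈ Icc a b, 0 < ψ x := by
  intro x hx
  by_contra! hψx
  obtain ⟨c, hc, hψc, hψ_before⟩ :=
    (hs.continuousOn_ψ.mono (Icc_subset_Icc le_rfl hx.2)).exists_first_nonpos hx.1 hψx
  have hsc := hs.mono le_rfl (hc.2.trans hx.2)
  have hψ'c := hsc.ψ'_pos hL (fun y hy ↦ (hψ_before y (Ioo_subset_Ico_self hy)).le) ha hψ'a
  have hmono := monotoneOn_Icc_of_hasDerivAt_nonneg hsc.continuousOn_ψ hsc.hasDerivAt_ψ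
    fun y hy ↦ (hψ'c y (Ioo_subset_Icc_self hy)).le
  exact (hψa.trans_le (hmono ⟨le_rfl, hc.1⟩ ⟨hc.1, le_rfl⟩ hc.1)).not_ge hψc

lemma ψ_pos_and_ψ'_pos (hs : IsRadialSolution k L a b h h' ψ ψ' ψ'') (hL : 0 ≤ L)
    (ha : 0 < h a) (hψa : 0 < ψ a) (hψ'a : 0 < ψ' a) : ∀ x ∈ Icc a b, 0 < ψ x ∧ 0 < ψ' x :=
  fun x hx ↦ ⟨hs.ψ_pos hL ha hψa hψ'a x hx,
    hs.ψ'_pos hL (fun y hy ↦ (hs.ψ_pos hL ha hψa hψ'a y (Ioo_subset_Icc_self hy)).le)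
      ha hψ'a x hx⟩

end IsRadialSolution

theorem stmt_1_general
    (n p m : ℤ) (hp : 1 ≤ p) (hm : 1 ≤ m)
    (R : ℝ)
    (h h' ψ ψ' ψ'' : ℝ → ℝ)
    (hder1 : ∀ r ∈ Set.Icc (0:ℝ) R, HasDerivWithinAt h (h' r) (Set.Icc 0 R) r)
    (pder1 : ∀ r ∈ Set.Icc (0:ℝ) R, HasDerivWithinAt ψ (ψ' r) (Set.Icc 0 R) r)
    (pder2 : ∀ r ∈ Set.Icc (0:ℝ) R, HasDerivWithinAt ψ' (ψ'' r) (Set.Icc 0 R) r)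
    (hpos : ∀ r ∈ Set.Ioc (0:ℝ) R, 0 < h r)
    (ψ0 : ψ 0 = 0)
    (ode : ∀ r ∈ Set.Ioc (0:ℝ) R,
      ψ'' r + ((n - 2 * p - 1 : ℤ) : ℝ) * (h' r / h r) * ψ' r
        - (((m + p) * (n + m - p - 2) : ℤ) : ℝ) * ψ r / (h r) ^ 2 = 0)
    (hp2 : 2 * p ≤ n - 2)
    (hposnear : ∃ ε, 0 < ε ∧ ε ≤ R ∧ ∀ r ∈ Set.Ioo (0:ℝ) ε, 0 < ψ r) :
    ∀ r ∈ Set.Ioc (0:ℝ) R, 0 < ψ r ∧ 0 < ψ' r := by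
  obtain ⟨ε, hε, -, hψε⟩ := hposnear
  have hk : ((n - 2 * p - 1 : ℤ) : ℝ) = ((n - 2 * p - 1).toNat : ℕ) := by
    exact_mod_cast (Int.toNat_of_nonneg (by omega)).symm
  have hL : (0 : ℝ) ≤ (((m + p) * (n + m - p - 2) : ℤ) : ℝ) := by
    exact_mod_cast mul_nonneg (by omega : (0 : ℤ) ≤ m + p) (by omega)
  have hs : IsRadialSolution (n - 2 * p - 1).toNat (((m + p) * (n + m - p - 2) : ℤ) : ℝ) 0 R
      h h' ψ ψ' ψ'' :=
    { continuousOn_h := fun r hr ↦ (hder1 r hr).continuousWithinAt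
      continuousOn_ψ := fun r hr ↦ (pder1 r hr).continuousWithinAt
      continuousOn_ψ' := fun r hr ↦ (pder2 r hr).continuousWithinAt
      hasDerivAt_h := fun r hr ↦
        (hder1 r (Ioo_subset_Icc_self hr)).hasDerivAt (Icc_mem_nhds hr.1 hr.2)
      hasDerivAt_ψ := fun r hr ↦
        (pder1 r (Ioo_subset_Icc_self hr)).hasDerivAt (Icc_mem_nhds hr.1 hr.2)
      hasDerivAt_ψ' := fun r hr ↦
        (pder2 r (Ioo_subset_Icc_self hr)).hasDerivAt (Icc_mem_nhds hr.1 hr.2)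
      h_pos := hpos
      ode := fun r hr ↦ hk ▸ ode r hr }
  intro r hr
  have hb : 0 < min r (ε / 2) := lt_min hr.1 (half_pos hε)
  have hbε : min r (ε / 2) < ε := (min_le_right _ _).trans_lt (half_lt_self hε)
  have hs₀ := hs.mono le_rfl ((min_le_left r (ε / 2)).trans hr.2)
  obtain ⟨ξ, hξ, hψξ, hψ'ξ⟩ := exists_pos_and_deriv_pos_of_eq_zero hb hs₀.continuousOn_ψ
    hs₀.hasDerivAt_ψ ψ0 fun x hx ↦ hψε x ⟨hx.1, hx.2.trans_lt hbε⟩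
  have hξr : ξ ≤ r := hξ.2.le.trans (min_le_left _ _)
  exact (hs.mono hξ.1.le le_rfl).ψ_pos_and_ψ'_pos hL (hpos ξ ⟨hξ.1, hξr.trans hr.2⟩) hψξ hψ'ξ
    r ⟨hξr, hr.2⟩

/-- If ψ is positive near 0, then ψ and ψ' are positive on all of (0,R] (case 2p ≤ n-2). -/
theorem stmt_1
    (n p m : ℤ) (hn : 3 ≤ n) (hp : 1 ≤ p) (hm : 1 ≤ m)
    (R : ℝ) (hR : 0 < R)
    (h h' h'' ψ ψ' ψ'' : ℝ → ℝ)
    (hder1 : ∀ r ∈ Set.Icc (0:ℝ) R, HasDerivWithinAt h (h' r) (Set.Icc 0 R) r)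
    (hder2 : ∀ r ∈ Set.Icc (0:ℝ) R, HasDerivWithinAt h' (h'' r) (Set.Icc 0 R) r)
    (hcont2 : ContinuousOn h'' (Set.Icc 0 R))
    (pder1 : ∀ r ∈ Set.Icc (0:ℝ) R, HasDerivWithinAt ψ (ψ' r) (Set.Icc 0 R) r)
    (pder2 : ∀ r ∈ Set.Icc (0:ℝ) R, HasDerivWithinAt ψ' (ψ'' r) (Set.Icc 0 R) r)
    (pcont2 : ContinuousOn ψ'' (Set.Icc 0 R))
    (h0 : h 0 = 0) (h'0 : h' 0 = 1)
    (hpos : ∀ r ∈ Set.Ioc (0:ℝ) R, 0 < h r)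
    (ψ0 : ψ 0 = 0)
    (ode : ∀ r ∈ Set.Ioc (0:ℝ) R,
      ψ'' r + ((n - 2 * p - 1 : ℤ) : ℝ) * (h' r / h r) * ψ' r
        - (((m + p) * (n + m - p - 2) : ℤ) : ℝ) * ψ r / (h r) ^ 2 = 0)
    (hp2 : 2 * p ≤ n - 2)
    (hposnear : ∃ ε, 0 < ε ∧ ε ≤ R ∧ ∀ r ∈ Set.Ioo (0:ℝ) ε, 0 < ψ r) :
    ∀ r ∈ Set.Ioc (0:ℝ) R, 0 < ψ r ∧ 0 < ψ' r :=
  stmt_1_general n p m hp hm R h h' ψ ψ' ψ'' hder1 pder1 pder2 hpos ψ0 ode hp2 hposnear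
end

section
/- Assume moreover that 2p ≤ n−1. Then ψ'(0) = 0. -/
/-!
Multiplying the ODE by `r` gives
`r ψ'' = -c h' ψ' (r / h) + λ (ψ / r) (r / h)²` with `c = n - 2p - 1`.
As `r → 0⁺` the left side tends to `0` because `ψ''` is continuous, while the right side tends to
`(λ - c) ψ'(0)` because `h(r) / r → h'(0) = 1` and `ψ(r) / r → ψ'(0)`. For `2p ≤ n - 1` one has
`c < λ`, so `ψ'(0) = 0`.
-/

open Set Filter Topology

lemma tendsto_div_nhdsGT_of_hasDerivWithinAt {f : ℝ → ℝ} {f' : ℝ}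
    (hf : HasDerivWithinAt f f' (Ioi 0) 0) (hf0 : f 0 = 0) :
    Tendsto (fun r => f r / r) (𝓝[>] 0) (𝓝 f') := by
  refine ((hasDerivWithinAt_iff_tendsto_slope' (lt_irrefl 0)).mp hf).congr fun r => ?_
  simp [slope_def_field, hf0]

section RegularSingularODE

variable {h h' ψ ψ' ψ'' : ℝ → ℝ} {c lam a : ℝ}

theorem tendsto_mul_of_regularSingular_ode
    (hh : HasDerivWithinAt h 1 (Ioi 0) 0) (hh0 : h 0 = 0) (hh' : Tendsto h' (𝓝[>] 0) (𝓝 1))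
    (hψ : HasDerivWithinAt ψ a (Ioi 0) 0) (hψ0 : ψ 0 = 0) (hψ' : Tendsto ψ' (𝓝[>] 0) (𝓝 a))
    (ode : ∀ᶠ r in 𝓝[>] 0, ψ'' r + c * (h' r / h r) * ψ' r - lam * ψ r / h r ^ 2 = 0) :
    Tendsto (fun r => r * ψ'' r) (𝓝[>] 0) (𝓝 ((lam - c) * a)) := by
  have hslope := tendsto_div_nhdsGT_of_hasDerivWithinAt hh hh0
  have hinv : Tendsto (fun r => r / h r) (𝓝[>] 0) (𝓝 1) := by
    simpa only [inv_div, inv_one] using hslope.inv₀ one_ne_zero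
  have hlim : Tendsto (fun r => -c * h' r * ψ' r * (r / h r) + lam * (ψ r / r) * (r / h r) ^ 2)
      (𝓝[>] 0) (𝓝 (-c * 1 * a * 1 + lam * a * 1 ^ 2)) :=
    (((tendsto_const_nhds.mul hh').mul hψ').mul hinv).add
      ((tendsto_const_nhds.mul (tendsto_div_nhdsGT_of_hasDerivWithinAt hψ hψ0)).mul (hinv.pow 2))
  rw [show -c * 1 * a * 1 + lam * a * 1 ^ 2 = (lam - c) * a by ring] at hlim
  refine hlim.congr' ?_
  filter_upwards [ode, self_mem_nhdsWithin, hslope.eventually_ne one_ne_zero]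
    with r hode hr hslope_ne
  have hr0 : r ≠ 0 := (mem_Ioi.mp hr).ne'
  have hhr : h r ≠ 0 := fun hz => hslope_ne (by simp [hz])
  rw [show ψ'' r = -c * (h' r / h r) * ψ' r + lam * ψ r / h r ^ 2 by linarith]
  field_simp

theorem eq_zero_of_regularSingular_ode (hcl : c ≠ lam)
    (hh : HasDerivWithinAt h 1 (Ioi 0) 0) (hh0 : h 0 = 0) (hh' : Tendsto h' (𝓝[>] 0) (𝓝 1))
    (hψ : HasDerivWithinAt ψ a (Ioi 0) 0) (hψ0 : ψ 0 = 0) (hψ' : Tendsto ψ' (𝓝[>] 0) (𝓝 a))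
    {b : ℝ} (hψ'' : Tendsto ψ'' (𝓝[>] 0) (𝓝 b))
    (ode : ∀ᶠ r in 𝓝[>] 0, ψ'' r + c * (h' r / h r) * ψ' r - lam * ψ r / h r ^ 2 = 0) :
    a = 0 := by
  have hzero : Tendsto (fun r => r * ψ'' r) (𝓝[>] 0) (𝓝 0) := by
    simpa only [id, zero_mul] using (tendsto_nhdsWithin_of_tendsto_nhds tendsto_id).mul hψ''
  have hprod : (lam - c) * a = 0 := tendsto_nhds_unique
    (tendsto_mul_of_regularSingular_ode hh hh0 hh' hψ hψ0 hψ' ode) hzero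
  exact (mul_eq_zero.mp hprod).resolve_left (sub_ne_zero.mpr hcl.symm)

end RegularSingularODE

theorem stmt_2_general
    (n p m : ℤ) (hp : 1 ≤ p) (hm : 1 ≤ m)
    (R : ℝ) (hR : 0 < R)
    (h h' h'' ψ ψ' ψ'' : ℝ → ℝ)
    (hder1 : ∀ r ∈ Set.Icc (0:ℝ) R, HasDerivWithinAt h (h' r) (Set.Icc 0 R) r)
    (hder2 : ∀ r ∈ Set.Icc (0:ℝ) R, HasDerivWithinAt h' (h'' r) (Set.Icc 0 R) r)
    (pder1 : ∀ r ∈ Set.Icc (0:ℝ) R, HasDerivWithinAt ψ (ψ' r) (Set.Icc 0 R) r)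
    (pder2 : ∀ r ∈ Set.Icc (0:ℝ) R, HasDerivWithinAt ψ' (ψ'' r) (Set.Icc 0 R) r)
    (pcont2 : ContinuousOn ψ'' (Set.Icc 0 R))
    (h0 : h 0 = 0) (h'0 : h' 0 = 1)
    (ψ0 : ψ 0 = 0)
    (ode : ∀ r ∈ Set.Ioc (0:ℝ) R,
      ψ'' r + ((n - 2 * p - 1 : ℤ) : ℝ) * (h' r / h r) * ψ' r
        - (((m + p) * (n + m - p - 2) : ℤ) : ℝ) * ψ r / (h r) ^ 2 = 0)
    (hp2 : 2 * p ≤ n - 1) :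
    ψ' 0 = 0 := by
  have h0mem : (0:ℝ) ∈ Icc 0 R := left_mem_Icc.mpr hR.le
  have hIcc : Icc 0 R ∈ 𝓝[>] (0:ℝ) := Icc_mem_nhdsGT hR
  have hcoeff : ((n - 2 * p - 1 : ℤ) : ℝ) ≠ (((m + p) * (n + m - p - 2) : ℤ) : ℝ) := by
    exact_mod_cast (show n - 2 * p - 1 < (m + p) * (n + m - p - 2) by nlinarith).ne
  refine eq_zero_of_regularSingular_ode hcoeff
    (h'0 ▸ (hder1 0 h0mem).mono_of_mem_nhdsWithin hIcc) h0
    (h'0 ▸ ((hder2 0 h0mem).continuousWithinAt.mono_of_mem_nhdsWithin hIcc).tendsto)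
    ((pder1 0 h0mem).mono_of_mem_nhdsWithin hIcc) ψ0
    ((pder2 0 h0mem).continuousWithinAt.mono_of_mem_nhdsWithin hIcc).tendsto
    ((pcont2 0 h0mem).mono_of_mem_nhdsWithin hIcc).tendsto ?_
  filter_upwards [Ioc_mem_nhdsGT hR] using ode

/-- For 2p ≤ n-1 one has ψ'(0) = 0. -/
theorem stmt_2
    (n p m : ℤ) (hn : 3 ≤ n) (hp : 1 ≤ p) (hm : 1 ≤ m)
    (R : ℝ) (hR : 0 < R)
    (h h' h'' ψ ψ' ψ'' : ℝ → ℝ)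
    (hder1 : ∀ r ∈ Set.Icc (0:ℝ) R, HasDerivWithinAt h (h' r) (Set.Icc 0 R) r)
    (hder2 : ∀ r ∈ Set.Icc (0:ℝ) R, HasDerivWithinAt h' (h'' r) (Set.Icc 0 R) r)
    (hcont2 : ContinuousOn h'' (Set.Icc 0 R))
    (pder1 : ∀ r ∈ Set.Icc (0:ℝ) R, HasDerivWithinAt ψ (ψ' r) (Set.Icc 0 R) r)
    (pder2 : ∀ r ∈ Set.Icc (0:ℝ) R, HasDerivWithinAt ψ' (ψ'' r) (Set.Icc 0 R) r)
    (pcont2 : ContinuousOn ψ'' (Set.Icc 0 R))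
    (h0 : h 0 = 0) (h'0 : h' 0 = 1)
    (hpos : ∀ r ∈ Set.Ioc (0:ℝ) R, 0 < h r)
    (ψ0 : ψ 0 = 0)
    (ode : ∀ r ∈ Set.Ioc (0:ℝ) R,
      ψ'' r + ((n - 2 * p - 1 : ℤ) : ℝ) * (h' r / h r) * ψ' r
        - (((m + p) * (n + m - p - 2) : ℤ) : ℝ) * ψ r / (h r) ^ 2 = 0)
    (hp2 : 2 * p ≤ n - 1) :
    ψ' 0 = 0 :=
  stmt_2_general n p m hp hm R hR h h' h'' ψ ψ' ψ'' hder1 hder2 pder1 pder2 pcont2 h0 h'0 ψ0 ode hp2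
end

section
/- Assume moreover that 2p ≤ n−1, that h''(r) ≤ 0 and 0 < h'(r) ≤ 1 for all r ∈ [0,R], and that ψ(r) > 0 and ψ'(r) ≥ 0 for all r ∈ (0,R]. Define u : (0,R] → ℝ by u(r) := λ·ψ(r)/h(r) − (λ/(m+p))·h'(r)·ψ'(r). Then for every r ∈ (0,R] one has u(r) = h(r)·ψ''(r) + (1−m−p)·h'(r)·ψ'(r), u is differentiable on (0,R], and u'(r) ≥ −( (m+p)/(h(r)·h'(r)) + (n−2p−1)·h'(r)/h(r) )·u(r). -/
/-!
Write `q = m + p`, `c = n - 2p - 1`, so that `λ = q (c + q - 1)`. Eliminating `ψ''` with the ODE gives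
`u' + (q / (h h') + c h' / h) u = (c + q - 1) (-h'') ψ' + q λ ψ (1 - h'²) / (h² h')`,
and both terms are nonnegative because `h'' ≤ 0`, `ψ' ≥ 0`, `ψ ≥ 0` and `0 < h' ≤ 1`.
-/

open Set

section Pointwise

variable {q c h h' h'' ψ ψ' ψ'' : ℝ}

theorem eq_of_warped_ode (hh : h ≠ 0) (hq : q ≠ 0)
    (ode : ψ'' + c * (h' / h) * ψ' - q * (c + q - 1) * ψ / h ^ 2 = 0) :
    q * (c + q - 1) * ψ / h - q * (c + q - 1) / q * h' * ψ'
      = h * ψ'' + (1 - q) * h' * ψ' := by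
  have hψ'' : ψ'' = q * (c + q - 1) * ψ / h ^ 2 - c * (h' / h) * ψ' := by linarith
  rw [hψ'']
  field_simp
  ring

theorem deriv_add_mul_eq_of_warped_ode (hh : h ≠ 0) (hh' : h' ≠ 0) (hq : q ≠ 0)
    (ode : ψ'' + c * (h' / h) * ψ' - q * (c + q - 1) * ψ / h ^ 2 = 0) :
    (q * (c + q - 1) * (ψ' * h - ψ * h') / h ^ 2 - q * (c + q - 1) / q * (h'' * ψ' + h' * ψ''))
      + (q / (h * h') + c * h' / h) * (q * (c + q - 1) * ψ / h - q * (c + q - 1) / q * h' * ψ')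
      = (c + q - 1) * -h'' * ψ' + q * (q * (c + q - 1)) * ψ * (1 - h' ^ 2) / (h ^ 2 * h') := by
  have hψ'' : ψ'' = q * (c + q - 1) * ψ / h ^ 2 - c * (h' / h) * ψ' := by linarith
  rw [hψ'']
  field_simp
  ring

theorem neg_mul_le_deriv_of_warped_ode (hq : 0 < q) (hcq : 0 ≤ c + q - 1)
    (hh : 0 < h) (hh'pos : 0 < h') (hh'le : h' ≤ 1) (hh'' : h'' ≤ 0) (hψ : 0 ≤ ψ) (hψ' : 0 ≤ ψ')
    (ode : ψ'' + c * (h' / h) * ψ' - q * (c + q - 1) * ψ / h ^ 2 = 0) :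
    -(q / (h * h') + c * h' / h) * (q * (c + q - 1) * ψ / h - q * (c + q - 1) / q * h' * ψ')
      ≤ q * (c + q - 1) * (ψ' * h - ψ * h') / h ^ 2
        - q * (c + q - 1) / q * (h'' * ψ' + h' * ψ'') := by
  have key := deriv_add_mul_eq_of_warped_ode (h'' := h'') hh.ne' hh'pos.ne' hq.ne' ode
  have concavity_term : 0 ≤ (c + q - 1) * -h'' * ψ' := by
    have hneg : 0 ≤ -h'' := neg_nonneg.mpr hh''
    positivity
  have slope_term : 0 ≤ q * (q * (c + q - 1)) * ψ * (1 - h' ^ 2) / (h ^ 2 * h') := by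
    have hsq : 0 ≤ 1 - h' ^ 2 := by nlinarith
    positivity
  linarith

end Pointwise

theorem HasDerivWithinAt.const_mul_div_sub_const_mul_mul {f g k l : ℝ → ℝ} {f' g' k' l' : ℝ}
    {s : Set ℝ} {x : ℝ} (a b : ℝ) (hf : HasDerivWithinAt f f' s x)
    (hg : HasDerivWithinAt g g' s x) (hgx : g x ≠ 0) (hk : HasDerivWithinAt k k' s x)
    (hl : HasDerivWithinAt l l' s x) :
    HasDerivWithinAt (fun y => a * f y / g y - b * k y * l y)
      (a * (f' * g x - f x * g') / g x ^ 2 - b * (k' * l x + k x * l')) s x :=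
  (((hf.const_mul a).fun_div hg hgx).sub ((hk.const_mul b).mul hl)).congr_deriv (by ring)

theorem stmt_4_general
    (n p m : ℤ) (hp : 1 ≤ p) (hm : 1 ≤ m)
    (R : ℝ)
    (h h' h'' ψ ψ' ψ'' : ℝ → ℝ)
    (hder1 : ∀ r ∈ Set.Icc (0:ℝ) R, HasDerivWithinAt h (h' r) (Set.Icc 0 R) r)
    (hder2 : ∀ r ∈ Set.Icc (0:ℝ) R, HasDerivWithinAt h' (h'' r) (Set.Icc 0 R) r)
    (pder1 : ∀ r ∈ Set.Icc (0:ℝ) R, HasDerivWithinAt ψ (ψ' r) (Set.Icc 0 R) r)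
    (pder2 : ∀ r ∈ Set.Icc (0:ℝ) R, HasDerivWithinAt ψ' (ψ'' r) (Set.Icc 0 R) r)
    (hpos : ∀ r ∈ Set.Ioc (0:ℝ) R, 0 < h r)
    (ode : ∀ r ∈ Set.Ioc (0:ℝ) R,
      ψ'' r + ((n - 2 * p - 1 : ℤ) : ℝ) * (h' r / h r) * ψ' r
        - (((m + p) * (n + m - p - 2) : ℤ) : ℝ) * ψ r / (h r) ^ 2 = 0)
    (hp2 : 2 * p ≤ n - 1)
    (hconc : ∀ r ∈ Set.Icc (0:ℝ) R, h'' r ≤ 0)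
    (hslope : ∀ r ∈ Set.Icc (0:ℝ) R, 0 < h' r ∧ h' r ≤ 1)
    (ψpos : ∀ r ∈ Set.Ioc (0:ℝ) R, 0 < ψ r ∧ 0 ≤ ψ' r)
    (u : ℝ → ℝ)
    (hu : ∀ r ∈ Set.Ioc (0:ℝ) R,
      u r = (((m + p) * (n + m - p - 2) : ℤ) : ℝ) * ψ r / h r
        - ((((m + p) * (n + m - p - 2) : ℤ) : ℝ) / ((m : ℝ) + p)) * h' r * ψ' r) :
    (∀ r ∈ Set.Ioc (0:ℝ) R,
        u r = h r * ψ'' r + (1 - (m : ℝ) - p) * h' r * ψ' r) ∧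
    ∃ u' : ℝ → ℝ,
      (∀ r ∈ Set.Ioc (0:ℝ) R, HasDerivWithinAt u (u' r) (Set.Ioc 0 R) r) ∧
      ∀ r ∈ Set.Ioc (0:ℝ) R,
        u' r ≥ -(((m : ℝ) + p) / (h r * h' r)
            + ((n : ℝ) - 2 * p - 1) * h' r / h r) * u r := by
  have hm' : (1 : ℝ) ≤ m := by exact_mod_cast hm
  have hp' : (1 : ℝ) ≤ p := by exact_mod_cast hp
  have hp2' : 2 * (p : ℝ) ≤ n - 1 := by exact_mod_cast hp2
  set q : ℝ := (m : ℝ) + p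
  set c : ℝ := (n : ℝ) - 2 * p - 1
  have hq : 0 < q := by positivity
  have hcq : 0 ≤ c + q - 1 := by
    show 0 ≤ (n : ℝ) - 2 * p - 1 + (m + p) - 1
    linarith
  have hlam : (((m + p) * (n + m - p - 2) : ℤ) : ℝ) = q * (c + q - 1) := by push_cast; ring
  have hc : ((n - 2 * p - 1 : ℤ) : ℝ) = c := by push_cast; ring
  simp only [hlam, hc] at ode hu
  have hIcc : Ioc (0 : ℝ) R ⊆ Icc 0 R := Ioc_subset_Icc_self
  refine ⟨fun r hr => ?_, fun r => q * (c + q - 1) * (ψ' r * h r - ψ r * h' r) / h r ^ 2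
      - q * (c + q - 1) / q * (h'' r * ψ' r + h' r * ψ'' r), fun r hr => ?_, fun r hr => ?_⟩
  · rw [hu r hr, eq_of_warped_ode (hpos r hr).ne' hq.ne' (ode r hr), sub_sub]
  · have hr' := hIcc hr
    exact (((pder1 r hr').mono hIcc).const_mul_div_sub_const_mul_mul _ _ ((hder1 r hr').mono hIcc)
      (hpos r hr).ne' ((hder2 r hr').mono hIcc) ((pder2 r hr').mono hIcc)).congr hu (hu r hr)
  · rw [hu r hr]
    exact neg_mul_le_deriv_of_warped_ode hq hcq (hpos r hr) (hslope r (hIcc hr)).1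
      (hslope r (hIcc hr)).2 (hconc r (hIcc hr)) (ψpos r hr).1.le (ψpos r hr).2 (ode r hr)

/-- Formula and differential inequality for the auxiliary function u. -/
theorem stmt_4
    (n p m : ℤ) (hn : 3 ≤ n) (hp : 1 ≤ p) (hm : 1 ≤ m)
    (R : ℝ) (hR : 0 < R)
    (h h' h'' ψ ψ' ψ'' : ℝ → ℝ)
    (hder1 : ∀ r ∈ Set.Icc (0:ℝ) R, HasDerivWithinAt h (h' r) (Set.Icc 0 R) r)
    (hder2 : ∀ r ∈ Set.Icc (0:ℝ) R, HasDerivWithinAt h' (h'' r) (Set.Icc 0 R) r)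
    (hcont2 : ContinuousOn h'' (Set.Icc 0 R))
    (pder1 : ∀ r ∈ Set.Icc (0:ℝ) R, HasDerivWithinAt ψ (ψ' r) (Set.Icc 0 R) r)
    (pder2 : ∀ r ∈ Set.Icc (0:ℝ) R, HasDerivWithinAt ψ' (ψ'' r) (Set.Icc 0 R) r)
    (pcont2 : ContinuousOn ψ'' (Set.Icc 0 R))
    (h0 : h 0 = 0) (h'0 : h' 0 = 1)
    (hpos : ∀ r ∈ Set.Ioc (0:ℝ) R, 0 < h r)
    (ψ0 : ψ 0 = 0)
    (ode : ∀ r ∈ Set.Ioc (0:ℝ) R,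
      ψ'' r + ((n - 2 * p - 1 : ℤ) : ℝ) * (h' r / h r) * ψ' r
        - (((m + p) * (n + m - p - 2) : ℤ) : ℝ) * ψ r / (h r) ^ 2 = 0)
    (hp2 : 2 * p ≤ n - 1)
    (hconc : ∀ r ∈ Set.Icc (0:ℝ) R, h'' r ≤ 0)
    (hslope : ∀ r ∈ Set.Icc (0:ℝ) R, 0 < h' r ∧ h' r ≤ 1)
    (ψpos : ∀ r ∈ Set.Ioc (0:ℝ) R, 0 < ψ r ∧ 0 ≤ ψ' r)
    (u : ℝ → ℝ)
    (hu : ∀ r ∈ Set.Ioc (0:ℝ) R,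
      u r = (((m + p) * (n + m - p - 2) : ℤ) : ℝ) * ψ r / h r
        - ((((m + p) * (n + m - p - 2) : ℤ) : ℝ) / ((m : ℝ) + p)) * h' r * ψ' r) :
    (∀ r ∈ Set.Ioc (0:ℝ) R,
        u r = h r * ψ'' r + (1 - (m : ℝ) - p) * h' r * ψ' r) ∧
    ∃ u' : ℝ → ℝ,
      (∀ r ∈ Set.Ioc (0:ℝ) R, HasDerivWithinAt u (u' r) (Set.Ioc 0 R) r) ∧
      ∀ r ∈ Set.Ioc (0:ℝ) R,
        u' r ≥ -(((m : ℝ) + p) / (h r * h' r)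
            + ((n : ℝ) - 2 * p - 1) * h' r / h r) * u r :=
  stmt_4_general n p m hp hm R h h' h'' ψ ψ' ψ'' hder1 hder2 pder1 pder2 hpos ode hp2 hconc hslope
    ψpos u hu
end

section
/- Assume moreover that 2p ≤ n−1, that h''(r) ≤ 0 and 0 < h'(r) ≤ 1 for all r ∈ [0,R], that ψ(r) > 0 and ψ'(r) ≥ 0 for all r ∈ (0,R], and that ψ'(0) = 0. Then for every r ∈ (0,R] one has (m+p)·ψ(r)/h(r) ≥ h'(r)·ψ'(r); equivalently, the quantity u(r) := λ·ψ(r)/h(r) − (λ/(m+p))·h'(r)·ψ'(r) is nonnegative on (0,R]. -/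
/-!
Write `a = m + p` and `k = n + m - p - 2`, so that `λ = a k` and the first-order coefficient of
the ODE is `k - a + 1`. The defect `F = a ψ - h h' ψ'` vanishes at `0`, and the ODE turns the
derivative of `F h^k` into `h^k ψ' (a (1 - h'^2) - h h'')`, which is nonnegative because `h` is
concave with `0 < h' ≤ 1`. Hence `F h^k` is nondecreasing from `0`, so `F ≥ 0` where `h > 0`.
-/

open Set

namespace WarpedDtN

def defect (a : ℝ) (h h' ψ ψ' : ℝ → ℝ) (r : ℝ) : ℝ := a * ψ r - h r * h' r * ψ' r

theorem hasDerivWithinAt_defect {a r : ℝ} {s : Set ℝ} {h h' h'' ψ ψ' ψ'' : ℝ → ℝ}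
    (hh : HasDerivWithinAt h (h' r) s r) (hh' : HasDerivWithinAt h' (h'' r) s r)
    (hψ : HasDerivWithinAt ψ (ψ' r) s r) (hψ' : HasDerivWithinAt ψ' (ψ'' r) s r) :
    HasDerivWithinAt (defect a h h' ψ ψ')
      (a * ψ' r - ((h' r * h' r + h r * h'' r) * ψ' r + h r * h' r * ψ'' r)) s r :=
  (hψ.const_mul a).sub ((hh.mul hh').mul hψ')

theorem natCast_mul_pow_sub_one {x : ℝ} (hx : x ≠ 0) (k : ℕ) :
    (k : ℝ) * x ^ (k - 1) = k * x ^ k / x := by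
  cases k with
  | zero => simp
  | succ k => field_simp; simp [pow_succ]

/-- Along the ODE, `(F h^k)' = h^k ψ' (a (1 - h'^2) - h h'')` for `F = defect a h h' ψ ψ'`. -/
theorem defect_mul_pow_deriv_eq {a h h' h'' ψ ψ' ψ'' : ℝ} (k : ℕ) (hh : h ≠ 0)
    (ode : ψ'' + ((k : ℝ) - a + 1) * (h' / h) * ψ' - a * k * ψ / h ^ 2 = 0) :
    (a * ψ' - ((h' * h' + h * h'') * ψ' + h * h' * ψ'')) * h ^ k
        + (a * ψ - h * h' * ψ') * (k * h ^ (k - 1) * h')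
      = h ^ k * (ψ' * (a * (1 - h' ^ 2) - h * h'')) := by
  have hψ'' : ψ'' = a * k * ψ / h ^ 2 - ((k : ℝ) - a + 1) * (h' / h) * ψ' := by linarith
  rw [mul_assoc (k : ℝ), ← mul_assoc (k : ℝ), natCast_mul_pow_sub_one hh, hψ'']
  field_simp
  ring

section

variable {a R : ℝ} {k : ℕ} {h h' h'' ψ ψ' ψ'' : ℝ → ℝ}

theorem monotoneOn_defect_mul_pow (ha : 0 ≤ a)
    (hh : ∀ r ∈ Icc 0 R, HasDerivWithinAt h (h' r) (Icc 0 R) r)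
    (hh' : ∀ r ∈ Icc 0 R, HasDerivWithinAt h' (h'' r) (Icc 0 R) r)
    (hψ : ∀ r ∈ Icc 0 R, HasDerivWithinAt ψ (ψ' r) (Icc 0 R) r)
    (hψ' : ∀ r ∈ Icc 0 R, HasDerivWithinAt ψ' (ψ'' r) (Icc 0 R) r)
    (hpos : ∀ r ∈ Ioo 0 R, 0 < h r)
    (ode : ∀ r ∈ Ioo 0 R,
      ψ'' r + ((k : ℝ) - a + 1) * (h' r / h r) * ψ' r - a * k * ψ r / h r ^ 2 = 0)
    (hconc : ∀ r ∈ Ioo 0 R, h'' r ≤ 0) (hslope : ∀ r ∈ Ioo 0 R, h' r ^ 2 ≤ 1)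
    (hψ'_nonneg : ∀ r ∈ Ioo 0 R, 0 ≤ ψ' r) :
    MonotoneOn (fun r => defect a h h' ψ ψ' r * h r ^ k) (Icc 0 R) := by
  obtain ⟨G', hder, hG'⟩ : ∃ G' : ℝ → ℝ,
      (∀ r ∈ Icc 0 R,
        HasDerivWithinAt (fun r => defect a h h' ψ ψ' r * h r ^ k) (G' r) (Icc 0 R) r) ∧
      ∀ r ∈ Ioo 0 R, G' r = h r ^ k * (ψ' r * (a * (1 - h' r ^ 2) - h r * h'' r)) :=
    ⟨_, fun r hr => (hasDerivWithinAt_defect (hh r hr) (hh' r hr) (hψ r hr) (hψ' r hr)).mul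
      ((hh r hr).pow k), fun r hr => defect_mul_pow_deriv_eq k (hpos r hr).ne' (ode r hr)⟩
  refine monotoneOn_of_hasDerivWithinAt_nonneg (f' := G') (convex_Icc 0 R)
    (fun r hr => (hder r hr).continuousWithinAt) (fun r hr => ?_) (fun r hr => ?_)
  · exact (hder r (interior_subset hr)).mono interior_subset
  · rw [interior_Icc] at hr
    have hcurv : 0 ≤ a * (1 - h' r ^ 2) - h r * h'' r := by
      nlinarith [mul_nonneg ha (sub_nonneg.2 (hslope r hr)), hpos r hr, hconc r hr]
    rw [hG' r hr]
    exact mul_nonneg (pow_nonneg (hpos r hr).le k) (mul_nonneg (hψ'_nonneg r hr) hcurv)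

theorem defect_nonneg (ha : 0 ≤ a)
    (hh : ∀ r ∈ Icc 0 R, HasDerivWithinAt h (h' r) (Icc 0 R) r)
    (hh' : ∀ r ∈ Icc 0 R, HasDerivWithinAt h' (h'' r) (Icc 0 R) r)
    (hψ : ∀ r ∈ Icc 0 R, HasDerivWithinAt ψ (ψ' r) (Icc 0 R) r)
    (hψ' : ∀ r ∈ Icc 0 R, HasDerivWithinAt ψ' (ψ'' r) (Icc 0 R) r)
    (h0 : h 0 = 0) (ψ0 : ψ 0 = 0) (hpos : ∀ r ∈ Ioc 0 R, 0 < h r)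
    (ode : ∀ r ∈ Ioo 0 R,
      ψ'' r + ((k : ℝ) - a + 1) * (h' r / h r) * ψ' r - a * k * ψ r / h r ^ 2 = 0)
    (hconc : ∀ r ∈ Ioo 0 R, h'' r ≤ 0) (hslope : ∀ r ∈ Ioo 0 R, h' r ^ 2 ≤ 1)
    (hψ'_nonneg : ∀ r ∈ Ioo 0 R, 0 ≤ ψ' r) {r : ℝ} (hr : r ∈ Ioc 0 R) :
    0 ≤ defect a h h' ψ ψ' r := by
  have hmono := monotoneOn_defect_mul_pow ha hh hh' hψ hψ'
    (fun r hr => hpos r (Ioo_subset_Ioc_self hr)) ode hconc hslope hψ'_nonneg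
  have hweighted : 0 ≤ defect a h h' ψ ψ' r * h r ^ k := by
    simpa [defect, h0, ψ0] using
      hmono (left_mem_Icc.2 (hr.1.le.trans hr.2)) (Ioc_subset_Icc_self hr) hr.1.le
  exact nonneg_of_mul_nonneg_left hweighted (pow_pos (hpos r hr) k)

end

end WarpedDtN

open WarpedDtN in
theorem stmt_5_general
    (n p m : ℤ) (hp : 1 ≤ p) (hm : 1 ≤ m)
    (R : ℝ)
    (h h' h'' ψ ψ' ψ'' : ℝ → ℝ)
    (hder1 : ∀ r ∈ Set.Icc (0:ℝ) R, HasDerivWithinAt h (h' r) (Set.Icc 0 R) r)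
    (hder2 : ∀ r ∈ Set.Icc (0:ℝ) R, HasDerivWithinAt h' (h'' r) (Set.Icc 0 R) r)
    (pder1 : ∀ r ∈ Set.Icc (0:ℝ) R, HasDerivWithinAt ψ (ψ' r) (Set.Icc 0 R) r)
    (pder2 : ∀ r ∈ Set.Icc (0:ℝ) R, HasDerivWithinAt ψ' (ψ'' r) (Set.Icc 0 R) r)
    (h0 : h 0 = 0)
    (hpos : ∀ r ∈ Set.Ioc (0:ℝ) R, 0 < h r)
    (ψ0 : ψ 0 = 0)
    (ode : ∀ r ∈ Set.Ioc (0:ℝ) R,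
      ψ'' r + ((n - 2 * p - 1 : ℤ) : ℝ) * (h' r / h r) * ψ' r
        - (((m + p) * (n + m - p - 2) : ℤ) : ℝ) * ψ r / (h r) ^ 2 = 0)
    (hp2 : 2 * p ≤ n - 1)
    (hconc : ∀ r ∈ Set.Icc (0:ℝ) R, h'' r ≤ 0)
    (hslope : ∀ r ∈ Set.Icc (0:ℝ) R, 0 < h' r ∧ h' r ≤ 1)
    (ψpos : ∀ r ∈ Set.Ioc (0:ℝ) R, 0 < ψ r ∧ 0 ≤ ψ' r) :
    ∀ r ∈ Set.Ioc (0:ℝ) R, ((m : ℝ) + p) * ψ r / h r ≥ h' r * ψ' r := by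
  obtain ⟨k, hk⟩ : ∃ k : ℕ, (k : ℤ) = n + m - p - 2 := ⟨_, Int.toNat_of_nonneg (by omega)⟩
  have hkR : (k : ℝ) = n + m - p - 2 := by exact_mod_cast hk
  have ha : (0 : ℝ) ≤ m + p := by exact_mod_cast (by omega : (0 : ℤ) ≤ m + p)
  have ode' : ∀ r ∈ Ioo 0 R, ψ'' r + ((k : ℝ) - (m + p) + 1) * (h' r / h r) * ψ' r
      - (m + p) * k * ψ r / h r ^ 2 = 0 := fun r hr => by
    convert ode r (Ioo_subset_Ioc_self hr) using 4 <;> push_cast [hkR] <;> ring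
  intro r hr
  have hF := defect_nonneg ha hder1 hder2 pder1 pder2 h0 ψ0 hpos ode'
    (fun r hr => hconc r (Ioo_subset_Icc_self hr))
    (fun r hr => by nlinarith [hslope r (Ioo_subset_Icc_self hr)])
    (fun r hr => (ψpos r (Ioo_subset_Ioc_self hr)).2) hr
  rw [defect] at hF
  rw [ge_iff_le, le_div_iff₀ (hpos r hr)]
  linarith

/-- Nonnegativity of the auxiliary quantity: (m+p)ψ/h ≥ h'ψ' on (0,R]. -/
theorem stmt_5
    (n p m : ℤ) (hn : 3 ≤ n) (hp : 1 ≤ p) (hm : 1 ≤ m)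
    (R : ℝ) (hR : 0 < R)
    (h h' h'' ψ ψ' ψ'' : ℝ → ℝ)
    (hder1 : ∀ r ∈ Set.Icc (0:ℝ) R, HasDerivWithinAt h (h' r) (Set.Icc 0 R) r)
    (hder2 : ∀ r ∈ Set.Icc (0:ℝ) R, HasDerivWithinAt h' (h'' r) (Set.Icc 0 R) r)
    (hcont2 : ContinuousOn h'' (Set.Icc 0 R))
    (pder1 : ∀ r ∈ Set.Icc (0:ℝ) R, HasDerivWithinAt ψ (ψ' r) (Set.Icc 0 R) r)
    (pder2 : ∀ r ∈ Set.Icc (0:ℝ) R, HasDerivWithinAt ψ' (ψ'' r) (Set.Icc 0 R) r)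
    (pcont2 : ContinuousOn ψ'' (Set.Icc 0 R))
    (h0 : h 0 = 0) (h'0 : h' 0 = 1)
    (hpos : ∀ r ∈ Set.Ioc (0:ℝ) R, 0 < h r)
    (ψ0 : ψ 0 = 0)
    (ode : ∀ r ∈ Set.Ioc (0:ℝ) R,
      ψ'' r + ((n - 2 * p - 1 : ℤ) : ℝ) * (h' r / h r) * ψ' r
        - (((m + p) * (n + m - p - 2) : ℤ) : ℝ) * ψ r / (h r) ^ 2 = 0)
    (hp2 : 2 * p ≤ n - 1)
    (hconc : ∀ r ∈ Set.Icc (0:ℝ) R, h'' r ≤ 0)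
    (hslope : ∀ r ∈ Set.Icc (0:ℝ) R, 0 < h' r ∧ h' r ≤ 1)
    (ψpos : ∀ r ∈ Set.Ioc (0:ℝ) R, 0 < ψ r ∧ 0 ≤ ψ' r)
    (ψ'0 : ψ' 0 = 0) :
    ∀ r ∈ Set.Ioc (0:ℝ) R, ((m : ℝ) + p) * ψ r / h r ≥ h' r * ψ' r :=
  stmt_5_general n p m hp hm R h h' h'' ψ ψ' ψ'' hder1 hder2 pder1 pder2 h0 hpos ψ0 ode hp2 hconc
    hslope ψpos
end

section
/- Assume moreover that 2p ≤ n−1, that h''(r) ≤ 0 and 0 < h'(r) ≤ 1 for all r ∈ [0,R], that ψ(r) > 0 and ψ'(r) ≥ 0 for all r ∈ (0,R], and that ψ'(0) = 0. Then h(r)·ψ'(r) ≥ (m+p)·h'(r)·ψ(r) for all r ∈ [0,R]. In particular ψ'(R)/ψ(R) ≥ (m+p)·h'(R)/h(R), i.e. the m-th positive Steklov eigenvalue ψ'(R)/ψ(R) on coclosed p-forms is at least (m+p)·κ, where κ = h'(R)/h(R) is the principal curvature of the boundary. -/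
/-!
Write `K = m + p` and `q = n + m - p - 2`, so that the ODE reads
`ψ'' + (q + 1 - K) (h'/h) ψ' - K q ψ / h² = 0`. For `F = h ψ' - K h' ψ` one computes from the ODE
that `(h^q F)' = K h^(q-1) ψ (q (1 - h'²) - h h'')`, which is nonnegative when `h'' ≤ 0`,
`0 < h' ≤ 1` and `ψ ≥ 0`. Hence `h^q F` is nondecreasing, and it vanishes at `0`, so `F ≥ 0`.
-/

open Set

lemma escobar_identity {K q h h' h'' ψ ψ' ψ'' : ℝ} (hh : h ≠ 0)
    (ode : ψ'' + (q + 1 - K) * (h' / h) * ψ' - K * q * ψ / h ^ 2 = 0) :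
    q * h' * (h * ψ' - K * h' * ψ) + h * (h' * ψ' + h * ψ'' - K * (h'' * ψ + h' * ψ')) =
      K * ψ * (q * (1 - h' ^ 2) - h * h'') := by
  field_simp at ode
  linear_combination ode

section

variable {R K : ℝ} {q : ℕ} {h h' h'' ψ ψ' ψ'' : ℝ → ℝ}

lemma monotoneOn_pow_mul_escobar
    (hder1 : ∀ r ∈ Icc 0 R, HasDerivWithinAt h (h' r) (Icc 0 R) r)
    (hder2 : ∀ r ∈ Icc 0 R, HasDerivWithinAt h' (h'' r) (Icc 0 R) r)
    (pder1 : ∀ r ∈ Icc 0 R, HasDerivWithinAt ψ (ψ' r) (Icc 0 R) r)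
    (pder2 : ∀ r ∈ Icc 0 R, HasDerivWithinAt ψ' (ψ'' r) (Icc 0 R) r)
    (hpos : ∀ r ∈ Ioo 0 R, 0 < h r)
    (ode : ∀ r ∈ Ioo 0 R,
      ψ'' r + (q + 1 - K) * (h' r / h r) * ψ' r - K * q * ψ r / h r ^ 2 = 0)
    (hK : 0 ≤ K) (hconc : ∀ r ∈ Ioo 0 R, h'' r ≤ 0) (hslope : ∀ r ∈ Ioo 0 R, h' r ^ 2 ≤ 1)
    (ψnonneg : ∀ r ∈ Ioo 0 R, 0 ≤ ψ r) :
    MonotoneOn (fun r ↦ h r ^ q * (h r * ψ' r - K * h' r * ψ r)) (Icc 0 R) := by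
  have hG : ∀ r ∈ Icc 0 R, HasDerivWithinAt (fun r ↦ h r ^ q * (h r * ψ' r - K * h' r * ψ r))
      (q * h r ^ (q - 1) * h' r * (h r * ψ' r - K * h' r * ψ r) +
        h r ^ q * (h' r * ψ' r + h r * ψ'' r - K * (h'' r * ψ r + h' r * ψ' r))) (Icc 0 R) r :=
    fun r hr ↦ (((hder1 r hr).pow q).mul
      (((hder1 r hr).mul (pder2 r hr)).sub (((hder2 r hr).const_mul K).mul (pder1 r hr)))).congr_deriv
        (by simp only [Pi.mul_apply, Pi.sub_apply, Pi.pow_apply]; ring)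
  refine monotoneOn_of_hasDerivWithinAt_nonneg (convex_Icc 0 R)
    (fun r hr ↦ (hG r hr).continuousWithinAt)
    (fun r hr ↦ (hG r (interior_subset hr)).mono interior_subset) fun r hr ↦ ?_
  rw [interior_Icc] at hr
  have hr0 := hpos r hr
  have hpow : h r * (q * h r ^ (q - 1)) = q * h r ^ q := by
    rcases Nat.eq_zero_or_pos q with rfl | hq
    · simp
    · rw [mul_left_comm, mul_pow_sub_one hq.ne']
  refine nonneg_of_mul_nonneg_right ?_ hr0
  calc 0 ≤ h r ^ q * (K * ψ r * (q * (1 - h' r ^ 2) - h r * h'' r)) := by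
        have hcurv : 0 ≤ (q : ℝ) * (1 - h' r ^ 2) - h r * h'' r := by
          nlinarith [hconc r hr, hslope r hr, q.cast_nonneg (α := ℝ)]
        have := ψnonneg r hr
        positivity
    _ = _ := by
        rw [← escobar_identity hr0.ne' (ode r hr)]
        linear_combination -(h' r * (h r * ψ' r - K * h' r * ψ r)) * hpow

lemma escobar_bound
    (hder1 : ∀ r ∈ Icc 0 R, HasDerivWithinAt h (h' r) (Icc 0 R) r)
    (hder2 : ∀ r ∈ Icc 0 R, HasDerivWithinAt h' (h'' r) (Icc 0 R) r)
    (pder1 : ∀ r ∈ Icc 0 R, HasDerivWithinAt ψ (ψ' r) (Icc 0 R) r)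
    (pder2 : ∀ r ∈ Icc 0 R, HasDerivWithinAt ψ' (ψ'' r) (Icc 0 R) r)
    (h0 : h 0 = 0) (ψ0 : ψ 0 = 0) (hpos : ∀ r ∈ Ioc 0 R, 0 < h r)
    (ode : ∀ r ∈ Ioo 0 R,
      ψ'' r + (q + 1 - K) * (h' r / h r) * ψ' r - K * q * ψ r / h r ^ 2 = 0)
    (hK : 0 ≤ K) (hconc : ∀ r ∈ Ioo 0 R, h'' r ≤ 0) (hslope : ∀ r ∈ Ioo 0 R, h' r ^ 2 ≤ 1)
    (ψnonneg : ∀ r ∈ Ioo 0 R, 0 ≤ ψ r) :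
    ∀ r ∈ Icc 0 R, K * h' r * ψ r ≤ h r * ψ' r := by
  have hmono := monotoneOn_pow_mul_escobar hder1 hder2 pder1 pder2
    (fun r hr ↦ hpos r (Ioo_subset_Ioc_self hr)) ode hK hconc hslope ψnonneg
  rintro r ⟨hr0, hrR⟩
  rcases hr0.eq_or_lt with rfl | hr0
  · simp [h0, ψ0]
  · have hG := hmono (left_mem_Icc.2 (hr0.le.trans hrR)) ⟨hr0.le, hrR⟩ hr0.le
    simp only [h0, ψ0, mul_zero, zero_mul, sub_zero] at hG
    linarith [nonneg_of_mul_nonneg_right hG (pow_pos (hpos r ⟨hr0, hrR⟩) q)]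

end

theorem stmt_6_general
    (n p m : ℤ) (hp : 1 ≤ p) (hm : 1 ≤ m)
    (R : ℝ) (hR : 0 < R)
    (h h' h'' ψ ψ' ψ'' : ℝ → ℝ)
    (hder1 : ∀ r ∈ Set.Icc (0:ℝ) R, HasDerivWithinAt h (h' r) (Set.Icc 0 R) r)
    (hder2 : ∀ r ∈ Set.Icc (0:ℝ) R, HasDerivWithinAt h' (h'' r) (Set.Icc 0 R) r)
    (pder1 : ∀ r ∈ Set.Icc (0:ℝ) R, HasDerivWithinAt ψ (ψ' r) (Set.Icc 0 R) r)
    (pder2 : ∀ r ∈ Set.Icc (0:ℝ) R, HasDerivWithinAt ψ' (ψ'' r) (Set.Icc 0 R) r)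
    (h0 : h 0 = 0)
    (hpos : ∀ r ∈ Set.Ioc (0:ℝ) R, 0 < h r)
    (ψ0 : ψ 0 = 0)
    (ode : ∀ r ∈ Set.Ioc (0:ℝ) R,
      ψ'' r + ((n - 2 * p - 1 : ℤ) : ℝ) * (h' r / h r) * ψ' r
        - (((m + p) * (n + m - p - 2) : ℤ) : ℝ) * ψ r / (h r) ^ 2 = 0)
    (hp2 : 2 * p ≤ n - 1)
    (hconc : ∀ r ∈ Set.Icc (0:ℝ) R, h'' r ≤ 0)
    (hslope : ∀ r ∈ Set.Icc (0:ℝ) R, 0 < h' r ∧ h' r ≤ 1)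
    (ψpos : ∀ r ∈ Set.Ioc (0:ℝ) R, 0 < ψ r ∧ 0 ≤ ψ' r) :
    (∀ r ∈ Set.Icc (0:ℝ) R, h r * ψ' r ≥ ((m : ℝ) + p) * h' r * ψ r) ∧
    ψ' R / ψ R ≥ ((m : ℝ) + p) * (h' R / h R) := by
  obtain ⟨q, hq⟩ := Int.eq_ofNat_of_zero_le (by omega : 0 ≤ n + m - p - 2)
  have hqR : (q : ℝ) = n + m - p - 2 := by exact_mod_cast hq.symm
  have hcoeff : ((n - 2 * p - 1 : ℤ) : ℝ) = q + 1 - (m + p) := by push_cast; linarith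
  have heigen : (((m + p) * (n + m - p - 2) : ℤ) : ℝ) = (m + p) * q := by rw [hqR]; push_cast; ring
  have bound := escobar_bound hder1 hder2 pder1 pder2 h0 ψ0 hpos
    (fun r hr ↦ by simpa only [hcoeff, heigen] using ode r (Ioo_subset_Ioc_self hr))
    (by exact_mod_cast (by omega : (0 : ℤ) ≤ m + p))
    (fun r hr ↦ hconc r (Ioo_subset_Icc_self hr))
    (fun r hr ↦ by nlinarith [hslope r (Ioo_subset_Icc_self hr)])
    (fun r hr ↦ (ψpos r (Ioo_subset_Ioc_self hr)).1.le)
  have hRmem : R ∈ Ioc 0 R := ⟨hR, le_rfl⟩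
  refine ⟨bound, ?_⟩
  rw [ge_iff_le, ← mul_div_assoc, div_le_div_iff₀ (hpos R hRmem) (ψpos R hRmem).1]
  linarith [bound R (Ioc_subset_Icc_self hRmem)]

/-- Escobar-type lower bound: hψ' ≥ (m+p)h'ψ on [0,R], hence
ψ'(R)/ψ(R) ≥ (m+p)·h'(R)/h(R). -/
theorem stmt_6
    (n p m : ℤ) (hn : 3 ≤ n) (hp : 1 ≤ p) (hm : 1 ≤ m)
    (R : ℝ) (hR : 0 < R)
    (h h' h'' ψ ψ' ψ'' : ℝ → ℝ)
    (hder1 : ∀ r ∈ Set.Icc (0:ℝ) R, HasDerivWithinAt h (h' r) (Set.Icc 0 R) r)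
    (hder2 : ∀ r ∈ Set.Icc (0:ℝ) R, HasDerivWithinAt h' (h'' r) (Set.Icc 0 R) r)
    (hcont2 : ContinuousOn h'' (Set.Icc 0 R))
    (pder1 : ∀ r ∈ Set.Icc (0:ℝ) R, HasDerivWithinAt ψ (ψ' r) (Set.Icc 0 R) r)
    (pder2 : ∀ r ∈ Set.Icc (0:ℝ) R, HasDerivWithinAt ψ' (ψ'' r) (Set.Icc 0 R) r)
    (pcont2 : ContinuousOn ψ'' (Set.Icc 0 R))
    (h0 : h 0 = 0) (h'0 : h' 0 = 1)
    (hpos : ∀ r ∈ Set.Ioc (0:ℝ) R, 0 < h r)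
    (ψ0 : ψ 0 = 0)
    (ode : ∀ r ∈ Set.Ioc (0:ℝ) R,
      ψ'' r + ((n - 2 * p - 1 : ℤ) : ℝ) * (h' r / h r) * ψ' r
        - (((m + p) * (n + m - p - 2) : ℤ) : ℝ) * ψ r / (h r) ^ 2 = 0)
    (hp2 : 2 * p ≤ n - 1)
    (hconc : ∀ r ∈ Set.Icc (0:ℝ) R, h'' r ≤ 0)
    (hslope : ∀ r ∈ Set.Icc (0:ℝ) R, 0 < h' r ∧ h' r ≤ 1)
    (ψpos : ∀ r ∈ Set.Ioc (0:ℝ) R, 0 < ψ r ∧ 0 ≤ ψ' r)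
    (ψ'0 : ψ' 0 = 0) :
    (∀ r ∈ Set.Icc (0:ℝ) R, h r * ψ' r ≥ ((m : ℝ) + p) * h' r * ψ r) ∧
    ψ' R / ψ R ≥ ((m : ℝ) + p) * (h' R / h R) :=
  stmt_6_general n p m hp hm R hR h h' h'' ψ ψ' ψ'' hder1 hder2 pder1 pder2 h0 hpos ψ0 ode hp2 hconc
    hslope ψpos
end

section
/- Assume moreover that ψ(r) > 0 for all r ∈ (0,R] and that h(r)·ψ'(r) = (m+p)·h'(r)·ψ(r) for all r ∈ [0,R]. Then for every r ∈ (0,R] one has (m+p)·h(r)·h''(r) + λ·(h'(r)² − 1) = 0. -/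
/-!
Write `k = m + p` and `a = n - 2p - 1`, so that `λ = k (k + a - 1)`. Differentiating
`h ψ' = k h' ψ` gives `h ψ'' = k h'' ψ + (k - 1) h' ψ'`; substituting this and
`h ψ' = k h' ψ` into `h² · (ODE)` leaves `ψ · (k h h'' + λ (h'² - 1)) = 0`, and `ψ > 0`.
-/

theorem UniqueDiffWithinAt.eq_of_mul_deriv_eqOn {s : Set ℝ} {r k f'' g'' : ℝ}
    {f f' g g' : ℝ → ℝ} (hs : UniqueDiffWithinAt ℝ s r) (hr : r ∈ s)
    (hf : HasDerivWithinAt f (f' r) s r) (hf' : HasDerivWithinAt f' f'' s r)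
    (hg : HasDerivWithinAt g (g' r) s r) (hg' : HasDerivWithinAt g' g'' s r)
    (heq : ∀ x ∈ s, f x * g' x = k * f' x * g x) :
    f' r * g' r + f r * g'' = k * (f'' * g r + f' r * g' r) := by
  have hlhs : HasDerivWithinAt (fun x => k * (f' x * g x))
      (f' r * g' r + f r * g'') s r :=
    (hf.mul hg').congr (fun x hx => by simp only [Pi.mul_apply, heq x hx]; ring)
      (by simp only [Pi.mul_apply, heq r hr]; ring)
  exact hs.eq_deriv s hlhs ((hf'.mul hg).const_mul k)

theorem warping_identity_of_equality_case {k a H H' H'' Ψ Ψ' Ψ'' : ℝ}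
    (hH : H ≠ 0) (hΨ : Ψ ≠ 0) (heq : H * Ψ' = k * H' * Ψ)
    (hdiff : H' * Ψ' + H * Ψ'' = k * (H'' * Ψ + H' * Ψ'))
    (hode : Ψ'' + a * (H' / H) * Ψ' - k * (k + a - 1) * Ψ / H ^ 2 = 0) :
    k * H * H'' + k * (k + a - 1) * (H' ^ 2 - 1) = 0 := by
  have hode' : H ^ 2 * Ψ'' + a * H * H' * Ψ' - k * (k + a - 1) * Ψ = 0 := by
    field_simp at hode
    linear_combination hode
  have hprod : (k * H * H'' + k * (k + a - 1) * (H' ^ 2 - 1)) * Ψ = 0 := by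
    linear_combination hode' - H * hdiff - ((k - 1) * H' + a * H') * heq
  exact (mul_eq_zero.1 hprod).resolve_right hΨ

theorem stmt_7_general
    (n p m : ℤ)
    (R : ℝ)
    (h h' h'' ψ ψ' ψ'' : ℝ → ℝ)
    (hder1 : ∀ r ∈ Set.Icc (0:ℝ) R, HasDerivWithinAt h (h' r) (Set.Icc 0 R) r)
    (hder2 : ∀ r ∈ Set.Icc (0:ℝ) R, HasDerivWithinAt h' (h'' r) (Set.Icc 0 R) r)
    (pder1 : ∀ r ∈ Set.Icc (0:ℝ) R, HasDerivWithinAt ψ (ψ' r) (Set.Icc 0 R) r)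
    (pder2 : ∀ r ∈ Set.Icc (0:ℝ) R, HasDerivWithinAt ψ' (ψ'' r) (Set.Icc 0 R) r)
    (hpos : ∀ r ∈ Set.Ioc (0:ℝ) R, 0 < h r)
    (ode : ∀ r ∈ Set.Ioc (0:ℝ) R,
      ψ'' r + ((n - 2 * p - 1 : ℤ) : ℝ) * (h' r / h r) * ψ' r
        - (((m + p) * (n + m - p - 2) : ℤ) : ℝ) * ψ r / (h r) ^ 2 = 0)
    (ψpos : ∀ r ∈ Set.Ioc (0:ℝ) R, 0 < ψ r)
    (heq : ∀ r ∈ Set.Icc (0:ℝ) R, h r * ψ' r = ((m : ℝ) + p) * h' r * ψ r) :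
    ∀ r ∈ Set.Ioc (0:ℝ) R,
      ((m : ℝ) + p) * h r * h'' r
        + (((m + p) * (n + m - p - 2) : ℤ) : ℝ) * ((h' r) ^ 2 - 1) = 0 := by
  intro r hr
  have hrI : r ∈ Set.Icc (0:ℝ) R := Set.Ioc_subset_Icc_self hr
  have hlam : (((m + p) * (n + m - p - 2) : ℤ) : ℝ)
      = ((m : ℝ) + p) * (((m : ℝ) + p) + ((n - 2 * p - 1 : ℤ) : ℝ) - 1) := by
    push_cast; ring
  have hdiff := (uniqueDiffOn_Icc (hr.1.trans_le hr.2) r hrI).eq_of_mul_deriv_eqOn hrI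
    (hder1 r hrI) (hder2 r hrI) (pder1 r hrI) (pder2 r hrI) heq
  have hode := ode r hr
  rw [hlam] at hode ⊢
  exact warping_identity_of_equality_case (hpos r hr).ne' (ψpos r hr).ne' (heq r hrI) hdiff hode

/-- In the equality case hψ' = (m+p)h'ψ, the warping function satisfies
(m+p)hh'' + λ((h')² − 1) = 0. -/
theorem stmt_7
    (n p m : ℤ) (hn : 3 ≤ n) (hp : 1 ≤ p) (hm : 1 ≤ m)
    (R : ℝ) (hR : 0 < R)
    (h h' h'' ψ ψ' ψ'' : ℝ → ℝ)
    (hder1 : ∀ r ∈ Set.Icc (0:ℝ) R, HasDerivWithinAt h (h' r) (Set.Icc 0 R) r)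
    (hder2 : ∀ r ∈ Set.Icc (0:ℝ) R, HasDerivWithinAt h' (h'' r) (Set.Icc 0 R) r)
    (hcont2 : ContinuousOn h'' (Set.Icc 0 R))
    (pder1 : ∀ r ∈ Set.Icc (0:ℝ) R, HasDerivWithinAt ψ (ψ' r) (Set.Icc 0 R) r)
    (pder2 : ∀ r ∈ Set.Icc (0:ℝ) R, HasDerivWithinAt ψ' (ψ'' r) (Set.Icc 0 R) r)
    (pcont2 : ContinuousOn ψ'' (Set.Icc 0 R))
    (h0 : h 0 = 0) (h'0 : h' 0 = 1)
    (hpos : ∀ r ∈ Set.Ioc (0:ℝ) R, 0 < h r)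
    (ψ0 : ψ 0 = 0)
    (ode : ∀ r ∈ Set.Ioc (0:ℝ) R,
      ψ'' r + ((n - 2 * p - 1 : ℤ) : ℝ) * (h' r / h r) * ψ' r
        - (((m + p) * (n + m - p - 2) : ℤ) : ℝ) * ψ r / (h r) ^ 2 = 0)
    (ψpos : ∀ r ∈ Set.Ioc (0:ℝ) R, 0 < ψ r)
    (heq : ∀ r ∈ Set.Icc (0:ℝ) R, h r * ψ' r = ((m : ℝ) + p) * h' r * ψ r) :
    ∀ r ∈ Set.Ioc (0:ℝ) R,
      ((m : ℝ) + p) * h r * h'' r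
        + (((m + p) * (n + m - p - 2) : ℤ) : ℝ) * ((h' r) ^ 2 - 1) = 0 :=
  stmt_7_general n p m R h h' h'' ψ ψ' ψ'' hder1 hder2 pder1 pder2 hpos ode ψpos heq
end

section
/- Assume moreover that 2p ≤ n−1, that h''(r) ≤ 0 and 0 < h'(r) ≤ 1 for all r ∈ [0,R], that ψ(r) > 0 and ψ'(r) ≥ 0 for all r ∈ (0,R], that ψ'(0) = 0, and that equality holds at the endpoint: h(R)·ψ'(R) = (m+p)·h'(R)·ψ(R). Then h(r) = r for all r ∈ [0,R]. -/
/-!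
With `Q = n + m - p - 2` and `K = m + p`, the ODE for `ψ` makes the weighted quantity
`G = h^Q (h ψ' - K h' ψ)` satisfy `G' = K h^(Q-1) ψ (Q (1 - h'^2) - h h'')`, which is
nonnegative when `h'' ≤ 0` and `0 < h' ≤ 1`. Since `G(0) = 0` (as `h(0) = 0`) and `G(R) = 0` is the
equality case, `G` vanishes identically, so `G' = 0`; as `Q ≥ m ≥ 1` (because `2p ≤ n - 1`) both
terms of the bracket vanish, giving `h' ≡ 1` and hence `h(r) = r`.
-/

open Set

theorem eq_zero_of_hasDerivAt_nonneg_of_eq {G G' : ℝ → ℝ} {a b : ℝ}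
    (hcont : ContinuousOn G (Icc a b)) (hderiv : ∀ x ∈ Ioo a b, HasDerivAt G (G' x) x)
    (hnonneg : ∀ x ∈ Ioo a b, 0 ≤ G' x) (hab : G a = G b) :
    ∀ x ∈ Ioo a b, G' x = 0 := by
  intro x hx
  have hmono : MonotoneOn G (Icc a b) :=
    monotoneOn_of_hasDerivWithinAt_nonneg (convex_Icc a b) hcont
      (by simpa using fun y hy => (hderiv y hy).hasDerivWithinAt) (by simpa using hnonneg)
  have hle : a ≤ b := hx.1.le.trans hx.2.le
  have hconst : EqOn G (fun _ => G a) (Icc a b) := fun y hy =>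
    le_antisymm (hab ▸ hmono hy (right_mem_Icc.2 hle) hy.2) (hmono (left_mem_Icc.2 hle) hy hy.1)
  exact (hderiv x hx).unique <| (hasDerivAt_const x (G a)).congr_of_eventuallyEq <|
    Filter.eventuallyEq_of_mem (Icc_mem_nhds hx.1 hx.2) hconst

theorem eq_add_sub_of_hasDerivAt_one {f : ℝ → ℝ} {a b : ℝ} (hcont : ContinuousOn f (Icc a b))
    (hderiv : ∀ x ∈ Ioo a b, HasDerivAt f 1 x) : ∀ x ∈ Icc a b, f x = f a + (x - a) := by
  intro x hx
  rcases hx.1.eq_or_lt with rfl | hax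
  · ring
  obtain ⟨c, -, hc⟩ := exists_hasDerivAt_eq_slope f (fun _ => 1) hax
    (hcont.mono (Icc_subset_Icc_right hx.2))
    fun y hy => hderiv y ⟨hy.1, hy.2.trans_le hx.2⟩
  rw [eq_div_iff (sub_pos.2 hax).ne'] at hc
  linarith

theorem hasDerivWithinAt_pow_mul_sub_of_ode {s : Set ℝ} {h h' ψ ψ' : ℝ → ℝ} {h'' ψ'' K r : ℝ}
    {j : ℕ} (hh : HasDerivWithinAt h (h' r) s r) (hh' : HasDerivWithinAt h' h'' s r)
    (hψ : HasDerivWithinAt ψ (ψ' r) s r) (hψ' : HasDerivWithinAt ψ' ψ'' s r) (hr : h r ≠ 0)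
    (ode : ψ'' + (j + 2 - K) * (h' r / h r) * ψ' r - K * (j + 1) * ψ r / h r ^ 2 = 0) :
    HasDerivWithinAt (fun x => h x ^ (j + 1) * (h x * ψ' x - K * (h' x * ψ x)))
      (K * h r ^ j * ψ r * ((j + 1) * (1 - h' r ^ 2) - h r * h'')) s r := by
  refine ((hh.fun_pow (j + 1)).fun_mul ((hh.fun_mul hψ').fun_sub ((hh'.fun_mul hψ).const_mul K)))
    |>.congr_deriv ?_
  field_simp at ode
  simp only [add_tsub_cancel_right, Nat.cast_add, Nat.cast_one]
  linear_combination h r ^ j * ode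

theorem mul_one_sub_sq_sub_mul_nonneg {Q x y z : ℝ} (hQ : 0 ≤ Q) (hx : 0 ≤ x) (hy₀ : 0 ≤ y)
    (hy₁ : y ≤ 1) (hz : z ≤ 0) : 0 ≤ Q * (1 - y ^ 2) - x * z := by
  have : 0 ≤ 1 - y ^ 2 := by nlinarith
  nlinarith [mul_nonneg hQ this, mul_nonpos_of_nonneg_of_nonpos hx hz]

theorem eq_one_of_mul_one_sub_sq_sub_mul_eq_zero {Q x y z : ℝ} (hQ : 0 < Q) (hx : 0 ≤ x)
    (hy₀ : 0 ≤ y) (hy₁ : y ≤ 1) (hz : z ≤ 0) (h : Q * (1 - y ^ 2) - x * z = 0) : y = 1 := by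
  have hsq : 1 - y ^ 2 = 0 := by
    have : 0 ≤ 1 - y ^ 2 := by nlinarith
    nlinarith [mul_nonneg hQ.le this, mul_nonpos_of_nonneg_of_nonpos hx hz]
  nlinarith

theorem eq_one_of_ode_of_endpoint_eq {R K : ℝ} {j : ℕ} {h h' h'' ψ ψ' ψ'' : ℝ → ℝ} (hK : 0 < K)
    (hh : ∀ r ∈ Icc 0 R, HasDerivWithinAt h (h' r) (Icc 0 R) r)
    (hh' : ∀ r ∈ Icc 0 R, HasDerivWithinAt h' (h'' r) (Icc 0 R) r)
    (hψ : ∀ r ∈ Icc 0 R, HasDerivWithinAt ψ (ψ' r) (Icc 0 R) r)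
    (hψ' : ∀ r ∈ Icc 0 R, HasDerivWithinAt ψ' (ψ'' r) (Icc 0 R) r)
    (h0 : h 0 = 0) (hR : h R * ψ' R = K * h' R * ψ R)
    (hbounds : ∀ r ∈ Ioo 0 R, 0 < h r ∧ 0 < ψ r ∧ 0 ≤ h' r ∧ h' r ≤ 1 ∧ h'' r ≤ 0)
    (ode : ∀ r ∈ Ioo 0 R,
      ψ'' r + (j + 2 - K) * (h' r / h r) * ψ' r - K * (j + 1) * ψ r / h r ^ 2 = 0) :
    ∀ r ∈ Ioo 0 R, h' r = 1 := by
  let G : ℝ → ℝ := fun x => h x ^ (j + 1) * (h x * ψ' x - K * (h' x * ψ x))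
  let B : ℝ → ℝ := fun x => (j + 1) * (1 - h' x ^ 2) - h x * h'' x
  have hG : ∀ x ∈ Ioo 0 R, HasDerivAt G (K * h x ^ j * ψ x * B x) x := fun x hx =>
    have hx' : x ∈ Icc 0 R := Ioo_subset_Icc_self hx
    (hasDerivWithinAt_pow_mul_sub_of_ode (hh x hx') (hh' x hx') (hψ x hx') (hψ' x hx')
      (hbounds x hx).1.ne' (ode x hx)).hasDerivAt (Icc_mem_nhds hx.1 hx.2)
  have hGcont : ContinuousOn G (Icc 0 R) := by
    have : ContinuousOn h (Icc 0 R) := fun x hx => (hh x hx).continuousWithinAt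
    have : ContinuousOn h' (Icc 0 R) := fun x hx => (hh' x hx).continuousWithinAt
    have : ContinuousOn ψ (Icc 0 R) := fun x hx => (hψ x hx).continuousWithinAt
    have : ContinuousOn ψ' (Icc 0 R) := fun x hx => (hψ' x hx).continuousWithinAt
    fun_prop
  have hGends : G 0 = G R := by
    simp only [G, h0, hR]
    ring
  intro x hx
  obtain ⟨hhx, hψx, h'x₀, h'x₁, h''x⟩ := hbounds x hx
  have hBx : B x = 0 := by
    refine (mul_eq_zero.1 ?_).resolve_left (mul_pos (mul_pos hK (pow_pos hhx j)) hψx).ne'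
    refine eq_zero_of_hasDerivAt_nonneg_of_eq hGcont hG (fun y hy => ?_) hGends x hx
    obtain ⟨hhy, hψy, h'y₀, h'y₁, h''y⟩ := hbounds y hy
    exact mul_nonneg (by positivity)
      (mul_one_sub_sq_sub_mul_nonneg (by positivity) hhy.le h'y₀ h'y₁ h''y)
  exact eq_one_of_mul_one_sub_sq_sub_mul_eq_zero (by positivity) hhx.le h'x₀ h'x₁ h''x hBx

theorem stmt_8_general
    (n p m : ℤ) (hp : 1 ≤ p) (hm : 1 ≤ m)
    (R : ℝ)
    (h h' h'' ψ ψ' ψ'' : ℝ → ℝ)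
    (hder1 : ∀ r ∈ Set.Icc (0:ℝ) R, HasDerivWithinAt h (h' r) (Set.Icc 0 R) r)
    (hder2 : ∀ r ∈ Set.Icc (0:ℝ) R, HasDerivWithinAt h' (h'' r) (Set.Icc 0 R) r)
    (pder1 : ∀ r ∈ Set.Icc (0:ℝ) R, HasDerivWithinAt ψ (ψ' r) (Set.Icc 0 R) r)
    (pder2 : ∀ r ∈ Set.Icc (0:ℝ) R, HasDerivWithinAt ψ' (ψ'' r) (Set.Icc 0 R) r)
    (h0 : h 0 = 0)
    (hpos : ∀ r ∈ Set.Ioc (0:ℝ) R, 0 < h r)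
    (ode : ∀ r ∈ Set.Ioc (0:ℝ) R,
      ψ'' r + ((n - 2 * p - 1 : ℤ) : ℝ) * (h' r / h r) * ψ' r
        - (((m + p) * (n + m - p - 2) : ℤ) : ℝ) * ψ r / (h r) ^ 2 = 0)
    (hp2 : 2 * p ≤ n - 1)
    (hconc : ∀ r ∈ Set.Icc (0:ℝ) R, h'' r ≤ 0)
    (hslope : ∀ r ∈ Set.Icc (0:ℝ) R, 0 < h' r ∧ h' r ≤ 1)
    (ψpos : ∀ r ∈ Set.Ioc (0:ℝ) R, 0 < ψ r ∧ 0 ≤ ψ' r)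
    (heqR : h R * ψ' R = ((m : ℝ) + p) * h' R * ψ R) :
    ∀ r ∈ Set.Icc (0:ℝ) R, h r = r := by
  obtain ⟨j, hj⟩ : ∃ j : ℕ, (j : ℤ) + 1 = n + m - p - 2 := ⟨(n + m - p - 3).toNat, by omega⟩
  have hjR : (j : ℝ) + 1 = n + m - p - 2 := by exact_mod_cast hj
  have hcoef₁ : ((n - 2 * p - 1 : ℤ) : ℝ) = j + 2 - (m + p) := by push_cast; linarith
  have hcoef₂ : (((m + p) * (n + m - p - 2) : ℤ) : ℝ) = (m + p) * (j + 1) := by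
    push_cast; rw [hjR]
  have hK : (0 : ℝ) < m + p := by exact_mod_cast (show 0 < m + p by omega)
  have hslope_one := eq_one_of_ode_of_endpoint_eq hK hder1 hder2 pder1 pder2 h0 heqR
    (fun r hr => ⟨hpos r (Ioo_subset_Ioc_self hr), (ψpos r (Ioo_subset_Ioc_self hr)).1,
      (hslope r (Ioo_subset_Icc_self hr)).1.le, (hslope r (Ioo_subset_Icc_self hr)).2,
      hconc r (Ioo_subset_Icc_self hr)⟩)
    (fun r hr => by simpa only [hcoef₁, hcoef₂] using ode r (Ioo_subset_Ioc_self hr))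
  have hcont : ContinuousOn h (Icc 0 R) := fun r hr => (hder1 r hr).continuousWithinAt
  have hderiv_one : ∀ x ∈ Ioo 0 R, HasDerivAt h 1 x := fun x hx => hslope_one x hx ▸
    (hder1 x (Ioo_subset_Icc_self hx)).hasDerivAt (Icc_mem_nhds hx.1 hx.2)
  intro r hr
  simpa [h0] using eq_add_sub_of_hasDerivAt_one hcont hderiv_one r hr

/-- Rigidity: equality at the endpoint forces h(r) = r, i.e. M is the Euclidean ball. -/
theorem stmt_8
    (n p m : ℤ) (hn : 3 ≤ n) (hp : 1 ≤ p) (hm : 1 ≤ m)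
    (R : ℝ) (hR : 0 < R)
    (h h' h'' ψ ψ' ψ'' : ℝ → ℝ)
    (hder1 : ∀ r ∈ Set.Icc (0:ℝ) R, HasDerivWithinAt h (h' r) (Set.Icc 0 R) r)
    (hder2 : ∀ r ∈ Set.Icc (0:ℝ) R, HasDerivWithinAt h' (h'' r) (Set.Icc 0 R) r)
    (hcont2 : ContinuousOn h'' (Set.Icc 0 R))
    (pder1 : ∀ r ∈ Set.Icc (0:ℝ) R, HasDerivWithinAt ψ (ψ' r) (Set.Icc 0 R) r)
    (pder2 : ∀ r ∈ Set.Icc (0:ℝ) R, HasDerivWithinAt ψ' (ψ'' r) (Set.Icc 0 R) r)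
    (pcont2 : ContinuousOn ψ'' (Set.Icc 0 R))
    (h0 : h 0 = 0) (h'0 : h' 0 = 1)
    (hpos : ∀ r ∈ Set.Ioc (0:ℝ) R, 0 < h r)
    (ψ0 : ψ 0 = 0)
    (ode : ∀ r ∈ Set.Ioc (0:ℝ) R,
      ψ'' r + ((n - 2 * p - 1 : ℤ) : ℝ) * (h' r / h r) * ψ' r
        - (((m + p) * (n + m - p - 2) : ℤ) : ℝ) * ψ r / (h r) ^ 2 = 0)
    (hp2 : 2 * p ≤ n - 1)
    (hconc : ∀ r ∈ Set.Icc (0:ℝ) R, h'' r ≤ 0)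
    (hslope : ∀ r ∈ Set.Icc (0:ℝ) R, 0 < h' r ∧ h' r ≤ 1)
    (ψpos : ∀ r ∈ Set.Ioc (0:ℝ) R, 0 < ψ r ∧ 0 ≤ ψ' r)
    (ψ'0 : ψ' 0 = 0)
    (heqR : h R * ψ' R = ((m : ℝ) + p) * h' R * ψ R) :
    ∀ r ∈ Set.Icc (0:ℝ) R, h r = r :=
  stmt_8_general n p m hp hm R h h' h'' ψ ψ' ψ'' hder1 hder2 pder1 pder2 h0 hpos ode hp2 hconc
    hslope ψpos heqR
end

section
/- Let R > 0, λ > 0, K ≥ 0, and let h : [0,R] → ℝ be continuous with 0 ≤ h(r) ≤ K·(R−r) for all r ∈ [0,R]. Then for every δ > 0 there exists a continuously differentiable ψ : [0,R] → ℝ with ψ(0) = 1, ψ(R) = 0, and ∫₀^R ψ'(r)²·h(r)² dr + λ·∫₀^R ψ(r)² dr < R·λ + δ. -/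
/-!
Take `ψ r = 1 - (r / R) ^ (n + 1)`. Since `0 ≤ ψ ≤ 1`, the potential term is at most `λ R`.
The gradient of `ψ` concentrates near the pole `r = R`, where `h ≤ K (R - r)` is small:
the energy term is at most `K² R (n + 1) / ((2n + 1)(2n + 3)) ≤ K² R / (n + 1)`,
which is below `δ` for large `n`.
-/

open MeasureTheory Set

theorem integral_pow_mul_sub_sq (R : ℝ) (m : ℕ) :
    ∫ r in (0:ℝ)..R, r ^ m * (R - r) ^ 2
      = 2 * R ^ (m + 3) / ((m + 1) * (m + 2) * (m + 3)) := by
  have hexpand : ∀ r : ℝ, r ^ m * (R - r) ^ 2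
      = R ^ 2 * r ^ m - 2 * R * r ^ (m + 1) + r ^ (m + 2) := fun r => by ring
  have hint : ∀ k : ℕ, IntervalIntegrable (fun r : ℝ => r ^ k) volume 0 R :=
    fun k => (continuous_pow k).intervalIntegrable _ _
  simp_rw [hexpand]
  rw [intervalIntegral.integral_add (((hint m).const_mul _).sub ((hint _).const_mul _)) (hint _),
    intervalIntegral.integral_sub ((hint m).const_mul _) ((hint _).const_mul _),
    intervalIntegral.integral_const_mul, intervalIntegral.integral_const_mul,
    integral_pow, integral_pow, integral_pow]
  push_cast
  field_simp
  ring

section PowerCutoff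

variable (R : ℝ) (n : ℕ)

noncomputable def powerCutoff (r : ℝ) : ℝ := 1 - r ^ (n + 1) / R ^ (n + 1)

noncomputable def powerCutoffDeriv (r : ℝ) : ℝ := -((n + 1) * r ^ n / R ^ (n + 1))

theorem hasDerivAt_powerCutoff (r : ℝ) :
    HasDerivAt (powerCutoff R n) (powerCutoffDeriv R n r) r := by
  have hpow : HasDerivAt (fun r : ℝ => r ^ (n + 1)) ((n + 1) * r ^ n) r := by
    simpa using hasDerivAt_pow (n + 1) r
  exact (hpow.div_const (R ^ (n + 1))).const_sub 1

theorem continuous_powerCutoff : Continuous (powerCutoff R n) := by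
  unfold powerCutoff; fun_prop

theorem continuous_powerCutoffDeriv : Continuous (powerCutoffDeriv R n) := by
  unfold powerCutoffDeriv; fun_prop

@[simp] theorem powerCutoff_zero : powerCutoff R n 0 = 1 := by
  simp [powerCutoff]

variable {R}

@[simp] theorem powerCutoff_self (hR : R ≠ 0) : powerCutoff R n R = 0 := by
  simp [powerCutoff, hR]

theorem powerCutoff_mem_Icc {r : ℝ} (hr : r ∈ Icc 0 R) : powerCutoff R n r ∈ Icc 0 1 := by
  have hquot_nonneg : 0 ≤ r ^ (n + 1) / R ^ (n + 1) :=
    div_nonneg (pow_nonneg hr.1 _) (pow_nonneg (hr.1.trans hr.2) _)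
  have hquot_le_one : r ^ (n + 1) / R ^ (n + 1) ≤ 1 :=
    div_le_one_of_le₀ (pow_le_pow_left₀ hr.1 hr.2 _) (pow_nonneg (hr.1.trans hr.2) _)
  constructor <;> simp only [powerCutoff] <;> linarith

theorem integral_powerCutoff_sq_le (hR : 0 ≤ R) :
    ∫ r in (0:ℝ)..R, powerCutoff R n r ^ 2 ≤ R := by
  calc ∫ r in (0:ℝ)..R, powerCutoff R n r ^ 2
      ≤ ∫ _ in (0:ℝ)..R, (1:ℝ) := by
        refine intervalIntegral.integral_mono_on hR
          (((continuous_powerCutoff R n).pow 2).intervalIntegrable 0 R) intervalIntegrable_const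
          fun r hr => ?_
        obtain ⟨hψ0, hψ1⟩ := powerCutoff_mem_Icc n hr
        nlinarith
    _ = R := by simp

theorem integral_powerCutoffDeriv_sq_mul_sq (hR : R ≠ 0) (K : ℝ) :
    ∫ r in (0:ℝ)..R, powerCutoffDeriv R n r ^ 2 * (K * (R - r)) ^ 2
      = K ^ 2 * R * (n + 1) / ((2 * n + 1) * (2 * n + 3)) := by
  have hfactor : ∀ r : ℝ, powerCutoffDeriv R n r ^ 2 * (K * (R - r)) ^ 2
      = (n + 1) ^ 2 * K ^ 2 / R ^ (2 * n + 2) * (r ^ (2 * n) * (R - r) ^ 2) := fun r => by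
    simp only [powerCutoffDeriv]
    field_simp
    ring
  simp_rw [hfactor]
  rw [intervalIntegral.integral_const_mul, integral_pow_mul_sub_sq]
  push_cast
  field_simp
  ring

theorem integral_powerCutoffDeriv_sq_mul_sq_le (hR : 0 < R) {K : ℝ} {h : ℝ → ℝ}
    (hc : ContinuousOn h (Icc 0 R)) (hbd : ∀ r ∈ Icc 0 R, 0 ≤ h r ∧ h r ≤ K * (R - r)) :
    ∫ r in (0:ℝ)..R, powerCutoffDeriv R n r ^ 2 * h r ^ 2 ≤ K ^ 2 * R / (n + 1) := by
  have hint : IntervalIntegrable (fun r => powerCutoffDeriv R n r ^ 2 * h r ^ 2) volume 0 R :=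
    (((continuous_powerCutoffDeriv R n).pow 2).continuousOn.mul
      (hc.pow 2)).intervalIntegrable_of_Icc hR.le
  have hint' : IntervalIntegrable
      (fun r => powerCutoffDeriv R n r ^ 2 * (K * (R - r)) ^ 2) volume 0 R :=
    (by unfold powerCutoffDeriv; fun_prop : Continuous _).intervalIntegrable 0 R
  calc ∫ r in (0:ℝ)..R, powerCutoffDeriv R n r ^ 2 * h r ^ 2
      ≤ ∫ r in (0:ℝ)..R, powerCutoffDeriv R n r ^ 2 * (K * (R - r)) ^ 2 := by
        refine intervalIntegral.integral_mono_on hR.le hint hint' fun r hr => ?_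
        obtain ⟨hh0, hhK⟩ := hbd r hr
        gcongr
    _ = K ^ 2 * R * (n + 1) / ((2 * n + 1) * (2 * n + 3)) :=
        integral_powerCutoffDeriv_sq_mul_sq n hR.ne' K
    _ ≤ K ^ 2 * R / (n + 1) := by
        rw [div_le_div_iff₀ (by positivity) (by positivity)]
        have hsq : ((n : ℝ) + 1) * (n + 1) ≤ (2 * n + 1) * (2 * n + 3) := by nlinarith
        nlinarith [mul_le_mul_of_nonneg_left hsq (by positivity : (0 : ℝ) ≤ K ^ 2 * R)]

end PowerCutoff

theorem stmt_12_general
    (R lam K : ℝ) (hR : 0 < R) (hlam : 0 < lam)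
    (h : ℝ → ℝ) (hc : ContinuousOn h (Set.Icc 0 R))
    (hbd : ∀ r ∈ Set.Icc (0:ℝ) R, 0 ≤ h r ∧ h r ≤ K * (R - r)) :
    ∀ δ > (0:ℝ), ∃ ψ ψ' : ℝ → ℝ,
      (∀ r ∈ Set.Icc (0:ℝ) R, HasDerivWithinAt ψ (ψ' r) (Set.Icc 0 R) r) ∧
      ContinuousOn ψ' (Set.Icc 0 R) ∧ ψ 0 = 1 ∧ ψ R = 0 ∧
      (∫ r in (0:ℝ)..R, (ψ' r) ^ 2 * (h r) ^ 2)
        + lam * (∫ r in (0:ℝ)..R, (ψ r) ^ 2) < R * lam + δ := by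
  intro δ hδ
  obtain ⟨n, hn⟩ := exists_nat_gt (K ^ 2 * R / δ)
  have henergy : K ^ 2 * R / (n + 1) < δ := by
    rw [div_lt_iff₀ hδ] at hn
    rw [div_lt_iff₀ (by positivity)]
    nlinarith
  refine ⟨powerCutoff R n, powerCutoffDeriv R n,
    fun r _ => (hasDerivAt_powerCutoff R n r).hasDerivWithinAt,
    (continuous_powerCutoffDeriv R n).continuousOn, powerCutoff_zero R n,
    powerCutoff_self n hR.ne', ?_⟩
  calc (∫ r in (0:ℝ)..R, powerCutoffDeriv R n r ^ 2 * h r ^ 2)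
        + lam * ∫ r in (0:ℝ)..R, powerCutoff R n r ^ 2
      ≤ K ^ 2 * R / (n + 1) + lam * R := by
        gcongr
        · exact integral_powerCutoffDeriv_sq_mul_sq_le n hR hc hbd
        · exact integral_powerCutoff_sq_le n hR.le
    _ < R * lam + δ := by linarith

/-- Test-function estimate behind Theorem 1.5(ii): the reduced Rayleigh energy can be
made smaller than R·λ + δ. -/
theorem stmt_12
    (R lam K : ℝ) (hR : 0 < R) (hlam : 0 < lam) (hK : 0 ≤ K)
    (h : ℝ → ℝ) (hc : ContinuousOn h (Set.Icc 0 R))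
    (hbd : ∀ r ∈ Set.Icc (0:ℝ) R, 0 ≤ h r ∧ h r ≤ K * (R - r)) :
    ∀ δ > (0:ℝ), ∃ ψ ψ' : ℝ → ℝ,
      (∀ r ∈ Set.Icc (0:ℝ) R, HasDerivWithinAt ψ (ψ' r) (Set.Icc 0 R) r) ∧
      ContinuousOn ψ' (Set.Icc 0 R) ∧ ψ 0 = 1 ∧ ψ R = 0 ∧
      (∫ r in (0:ℝ)..R, (ψ' r) ^ 2 * (h r) ^ 2)
        + lam * (∫ r in (0:ℝ)..R, (ψ r) ^ 2) < R * lam + δ :=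
  stmt_12_general R lam K hR hlam h hc hbd
end

section
/- Let n ≥ 4 and p ≥ 0 be integers with 2p ≤ n−4, let R > 0, λ > 0, C > 0, K ≥ 0, and let h : [0,R] → ℝ be continuous with 0 ≤ h(r) ≤ C and h(r) ≤ K·(R−r) for all r ∈ [0,R]. Then for every δ > 0 there exists a continuously differentiable ψ : [0,R] → ℝ with ψ(0) = 1, ψ(R) = 0, and ∫₀^R ( ψ'(r)²·h(r)^{n−2p−1} + λ·ψ(r)²·h(r)^{n−2p−3} ) dr < C^{n−2p−3}·R·λ + δ. -/
/-!
Take `ψ r = 1 - (r / R) ^ (k + 1)`. As `ψ ^ 2 ≤ 1` and `h ≤ C` on `[0, R]`, the potential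
term contributes at most `C ^ (n - 2p - 3) * R * λ`. In the gradient term the Lipschitz bound
at the pole gives `h ^ (n - 2p - 1) ≤ C ^ (n - 2p - 3) * K ^ 2 * (R - r) ^ 2`, and the weight
`(R - r) ^ 2` is small exactly where `ψ'` concentrates: the Beta integral
`∫₀ᴿ ψ' ^ 2 * (R - r) ^ 2 = (k + 1) R / ((2k + 1)(2k + 3)) ≤ R / (k + 1)`
tends to `0` as `k → ∞`.
-/

open MeasureTheory Set

noncomputable section

def polyCutoff (R : ℝ) (k : ℕ) (r : ℝ) : ℝ := 1 - (r / R) ^ (k + 1)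

def polyCutoffDeriv (R : ℝ) (k : ℕ) (r : ℝ) : ℝ := -((k + 1) / R * (r / R) ^ k)

end

section PolyCutoff

variable {R : ℝ} (k : ℕ)

theorem hasDerivAt_polyCutoff (r : ℝ) :
    HasDerivAt (polyCutoff R k) (polyCutoffDeriv R k r) r := by
  have hdiv : HasDerivAt (fun x : ℝ => x / R) (1 / R) r := by
    simpa using (hasDerivAt_id r).div_const R
  refine ((hdiv.pow (k + 1)).const_sub 1).congr_deriv ?_
  simp only [polyCutoffDeriv, Nat.add_sub_cancel]
  push_cast
  ring

theorem continuous_polyCutoff : Continuous (polyCutoff R k) := by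
  unfold polyCutoff; fun_prop

theorem continuous_polyCutoffDeriv : Continuous (polyCutoffDeriv R k) := by
  unfold polyCutoffDeriv; fun_prop

theorem polyCutoff_zero : polyCutoff R k 0 = 1 := by
  simp [polyCutoff]

theorem polyCutoff_self (hR : R ≠ 0) : polyCutoff R k R = 0 := by
  simp [polyCutoff, div_self hR]

theorem sq_polyCutoff_le_one (hR : 0 < R) {r : ℝ} (hr : r ∈ Icc 0 R) :
    polyCutoff R k r ^ 2 ≤ 1 := by
  have ht : r / R ∈ Icc (0 : ℝ) 1 :=
    ⟨div_nonneg hr.1 hR.le, (div_le_one hR).2 hr.2⟩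
  have hpow0 : 0 ≤ (r / R) ^ (k + 1) := pow_nonneg ht.1 _
  have hpow1 : (r / R) ^ (k + 1) ≤ 1 := pow_le_one₀ ht.1 ht.2
  rw [sq_le_one_iff_abs_le_one, abs_le]
  constructor <;> simp only [polyCutoff] <;> linarith

theorem integral_pow_mul_one_sub_sq :
    ∫ t in (0 : ℝ)..1, t ^ (2 * k) * (1 - t) ^ 2 =
      2 / ((2 * (k : ℝ) + 1) * (2 * k + 2) * (2 * k + 3)) := by
  have hexpand : ∀ t : ℝ, t ^ (2 * k) * (1 - t) ^ 2 =
      t ^ (2 * k) - 2 * t ^ (2 * k + 1) + t ^ (2 * k + 2) := fun t => by ring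
  simp only [hexpand]
  rw [intervalIntegral.integral_add, intervalIntegral.integral_sub,
    intervalIntegral.integral_const_mul, integral_pow, integral_pow, integral_pow]
  · push_cast
    field_simp
    ring
  all_goals exact Continuous.intervalIntegrable (by fun_prop) _ _

theorem integral_sq_polyCutoffDeriv_mul_sq_sub (hR : R ≠ 0) :
    ∫ r in (0 : ℝ)..R, polyCutoffDeriv R k r ^ 2 * (R - r) ^ 2 =
      (k + 1) * R / ((2 * (k : ℝ) + 1) * (2 * k + 3)) := by
  have hrescale : ∀ r : ℝ, polyCutoffDeriv R k r ^ 2 * (R - r) ^ 2 =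
      (k + 1) ^ 2 * ((r / R) ^ (2 * k) * (1 - r / R) ^ 2) := by
    intro r
    simp only [polyCutoffDeriv]
    field_simp
    ring
  simp only [hrescale]
  rw [intervalIntegral.integral_const_mul,
    intervalIntegral.integral_comp_div (fun t => t ^ (2 * k) * (1 - t) ^ 2) hR,
    zero_div, div_self hR, integral_pow_mul_one_sub_sq, smul_eq_mul]
  field_simp

theorem integral_sq_polyCutoffDeriv_mul_sq_sub_le (hR : 0 < R) :
    ∫ r in (0 : ℝ)..R, polyCutoffDeriv R k r ^ 2 * (R - r) ^ 2 ≤ R / (k + 1) := by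
  have hk : ((k : ℝ) + 1) ^ 2 ≤ (2 * k + 1) * (2 * k + 3) := by nlinarith
  rw [integral_sq_polyCutoffDeriv_mul_sq_sub k hR.ne',
    div_le_div_iff₀ (by positivity) (by positivity)]
  nlinarith [mul_le_mul_of_nonneg_left hk hR.le]

end PolyCutoff

theorem energy_density_le {x C K d a b lam : ℝ} (e : ℕ) (hx0 : 0 ≤ x) (hxC : x ≤ C)
    (hxK : x ≤ K * d) (hb : b ^ 2 ≤ 1) (hlam : 0 ≤ lam) :
    a ^ 2 * x ^ (e + 2) + lam * b ^ 2 * x ^ e ≤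
      C ^ e * K ^ 2 * (a ^ 2 * d ^ 2) + C ^ e * lam := by
  have hxe : x ^ e ≤ C ^ e := pow_le_pow_left₀ hx0 hxC e
  have hxe0 : 0 ≤ x ^ e := pow_nonneg hx0 e
  have hx2 : x ^ 2 ≤ (K * d) ^ 2 := pow_le_pow_left₀ hx0 hxK 2
  have hgradient : x ^ (e + 2) ≤ C ^ e * K ^ 2 * d ^ 2 := by
    calc x ^ (e + 2) = x ^ e * x ^ 2 := pow_add x e 2
      _ ≤ C ^ e * (K * d) ^ 2 := mul_le_mul hxe hx2 (by positivity) (hxe0.trans hxe)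
      _ = C ^ e * K ^ 2 * d ^ 2 := by ring
  have hpotential : lam * b ^ 2 * x ^ e ≤ C ^ e * lam := by
    calc lam * b ^ 2 * x ^ e ≤ lam * 1 * C ^ e := by gcongr
      _ = C ^ e * lam := by ring
  nlinarith [mul_le_mul_of_nonneg_left hgradient (sq_nonneg a)]

theorem integral_energy_le {R lam C K : ℝ} {h ψ ψ' : ℝ → ℝ} (e : ℕ) (hR : 0 ≤ R)
    (hlam : 0 ≤ lam) (hc : ContinuousOn h (Icc 0 R)) (hψ : ContinuousOn ψ (Icc 0 R))
    (hψ' : ContinuousOn ψ' (Icc 0 R)) (hψ1 : ∀ r ∈ Icc 0 R, ψ r ^ 2 ≤ 1)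
    (hbd : ∀ r ∈ Icc 0 R, 0 ≤ h r ∧ h r ≤ C ∧ h r ≤ K * (R - r)) :
    ∫ r in (0 : ℝ)..R, (ψ' r ^ 2 * h r ^ (e + 2) + lam * ψ r ^ 2 * h r ^ e)
      ≤ C ^ e * K ^ 2 * (∫ r in (0 : ℝ)..R, ψ' r ^ 2 * (R - r) ^ 2) + C ^ e * lam * R := by
  have hweight : IntervalIntegrable (fun r => ψ' r ^ 2 * (R - r) ^ 2) volume 0 R :=
    ContinuousOn.intervalIntegrable_of_Icc hR (by fun_prop)
  calc _ ≤ ∫ r in (0 : ℝ)..R, (C ^ e * K ^ 2 * (ψ' r ^ 2 * (R - r) ^ 2) + C ^ e * lam) := by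
        refine intervalIntegral.integral_mono_on hR
          (ContinuousOn.intervalIntegrable_of_Icc hR (by fun_prop))
          ((hweight.const_mul _).add intervalIntegrable_const) fun r hr => ?_
        obtain ⟨h0, hC, hK⟩ := hbd r hr
        exact energy_density_le e h0 hC hK (hψ1 r hr) hlam
    _ = _ := by
        rw [intervalIntegral.integral_add (hweight.const_mul _) intervalIntegrable_const,
          intervalIntegral.integral_const_mul, intervalIntegral.integral_const, smul_eq_mul]
        ring

theorem stmt_13_general
    (n p : ℤ) (hpn : 2 * p ≤ n - 4)
    (R lam C K : ℝ) (hR : 0 < R) (hlam : 0 < lam)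
    (h : ℝ → ℝ) (hc : ContinuousOn h (Set.Icc 0 R))
    (hbd : ∀ r ∈ Set.Icc (0:ℝ) R, 0 ≤ h r ∧ h r ≤ C ∧ h r ≤ K * (R - r)) :
    ∀ δ > (0:ℝ), ∃ ψ ψ' : ℝ → ℝ,
      (∀ r ∈ Set.Icc (0:ℝ) R, HasDerivWithinAt ψ (ψ' r) (Set.Icc 0 R) r) ∧
      ContinuousOn ψ' (Set.Icc 0 R) ∧ ψ 0 = 1 ∧ ψ R = 0 ∧
      (∫ r in (0:ℝ)..R,
          (ψ' r) ^ 2 * h r ^ (n - 2 * p - 1) + lam * (ψ r) ^ 2 * h r ^ (n - 2 * p - 3))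
        < C ^ (n - 2 * p - 3) * R * lam + δ := by
  intro δ hδ
  obtain ⟨e, he⟩ : ∃ e : ℕ, n - 2 * p - 3 = e := ⟨(n - 2 * p - 3).toNat, by omega⟩
  have he2 : n - 2 * p - 1 = ((e + 2 : ℕ) : ℤ) := by push_cast; omega
  obtain ⟨h0_nonneg, h0_le, -⟩ := hbd 0 ⟨le_rfl, hR.le⟩
  have hC : 0 ≤ C := h0_nonneg.trans h0_le
  obtain ⟨k, hk⟩ := exists_nat_gt (C ^ e * K ^ 2 * R / δ)
  have hsmall : C ^ e * K ^ 2 * (R / (k + 1)) < δ := by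
    rw [← mul_div_assoc, div_lt_iff₀ (by positivity)]
    rw [div_lt_iff₀ hδ] at hk
    nlinarith
  refine ⟨polyCutoff R k, polyCutoffDeriv R k,
    fun r _ => (hasDerivAt_polyCutoff k r).hasDerivWithinAt,
    (continuous_polyCutoffDeriv k).continuousOn, polyCutoff_zero k, polyCutoff_self k hR.ne', ?_⟩
  simp only [he, he2, zpow_natCast]
  calc _ ≤ C ^ e * K ^ 2 * (∫ r in (0 : ℝ)..R, polyCutoffDeriv R k r ^ 2 * (R - r) ^ 2)
        + C ^ e * lam * R :=
        integral_energy_le e hR.le hlam.le hc (continuous_polyCutoff k).continuousOn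
          (continuous_polyCutoffDeriv k).continuousOn (fun r hr => sq_polyCutoff_le_one k hR hr) hbd
    _ ≤ C ^ e * K ^ 2 * (R / (k + 1)) + C ^ e * lam * R := by
        gcongr
        exact integral_sq_polyCutoffDeriv_mul_sq_sub_le k hR
    _ < C ^ e * R * lam + δ := by linarith

/-- Test-function estimate behind Theorem 1.5(i): the reduced Rayleigh energy can be
made smaller than C^{n-2p-3}·R·λ + δ. -/
theorem stmt_13
    (n p : ℤ) (hn : 4 ≤ n) (hp : 0 ≤ p) (hpn : 2 * p ≤ n - 4)
    (R lam C K : ℝ) (hR : 0 < R) (hlam : 0 < lam) (hC : 0 < C) (hK : 0 ≤ K)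
    (h : ℝ → ℝ) (hc : ContinuousOn h (Set.Icc 0 R))
    (hbd : ∀ r ∈ Set.Icc (0:ℝ) R, 0 ≤ h r ∧ h r ≤ C ∧ h r ≤ K * (R - r)) :
    ∀ δ > (0:ℝ), ∃ ψ ψ' : ℝ → ℝ,
      (∀ r ∈ Set.Icc (0:ℝ) R, HasDerivWithinAt ψ (ψ' r) (Set.Icc 0 R) r) ∧
      ContinuousOn ψ' (Set.Icc 0 R) ∧ ψ 0 = 1 ∧ ψ R = 0 ∧
      (∫ r in (0:ℝ)..R,
          (ψ' r) ^ 2 * h r ^ (n - 2 * p - 1) + lam * (ψ r) ^ 2 * h r ^ (n - 2 * p - 3))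
        < C ^ (n - 2 * p - 3) * R * lam + δ :=
  stmt_13_general n p hpn R lam C K hR hlam h hc hbd
end

section
/- Let R > 0, λ > 0, and let h : [0,R) → ℝ be continuous with h(r) > 0 for all r ∈ [0,R) and ∫₀^R dr/h(r) = +∞. Then the infimum of ∫₀^R ( ψ'(r)²·h(r) + λ·ψ(r)²/h(r) ) dr, taken over all continuously differentiable ψ : [0,R] → ℝ with ψ(0) = 1 and ψ vanishing identically on [r₀,R] for some r₀ < R, equals √λ. -/
/-!
Substituting `s = ∫₀^r dt/h` turns the energy of `ψ = φ ∘ s` into `∫ (φ'² + λφ²) ds`, and the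
divergence of `∫ dr/h` means that `s` sweeps out all of `[0, ∞)`. For the lower bound,
`ψ'²h + λψ²/h + √λ (ψ²)' = (ψ'h + √λψ)²/h ≥ 0`, so the energy is at least `√λ ψ(0)² = √λ`.
For the upper bound, the `C¹` profiles `φ = (1 - s/T)₊^k` with `T = k/√λ` have energy
`√λ (1 + 1/(4k² - 1))`.
-/

open MeasureTheory Set Filter Topology

theorem neg_two_mul_mul_le_sq_mul_add_div {h : ℝ} (hh : 0 < h) (s a b : ℝ) :
    -(2 * s * (a * b)) ≤ b ^ 2 * h + s ^ 2 * a ^ 2 / h := by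
  have hsq : b ^ 2 * h + s ^ 2 * a ^ 2 / h + 2 * s * (a * b) = (b * h + s * a) ^ 2 / h := by
    field_simp; ring
  have : 0 ≤ (b * h + s * a) ^ 2 / h := by positivity
  linarith

theorem sqrt_mul_sub_sq_le_integral {a b lam : ℝ} {h ψ ψ' : ℝ → ℝ} (hab : a ≤ b) (hlam : 0 ≤ lam)
    (hc : ContinuousOn h (Icc a b)) (hpos : ∀ r ∈ Icc a b, 0 < h r)
    (hψ : ContinuousOn ψ (Icc a b)) (hder : ∀ r ∈ Ioo a b, HasDerivAt ψ (ψ' r) r)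
    (hψ' : ContinuousOn ψ' (Icc a b)) :
    √lam * (ψ a ^ 2 - ψ b ^ 2) ≤ ∫ r in a..b, ψ' r ^ 2 * h r + lam * ψ r ^ 2 / h r := by
  rw [← uIcc_of_le hab] at hc hψ hψ'
  have hne : ∀ r ∈ uIcc a b, h r ≠ 0 := fun r hr => (hpos r (uIcc_of_le hab ▸ hr)).ne'
  have hint : IntervalIntegrable (fun r => ψ' r ^ 2 * h r + lam * ψ r ^ 2 / h r) volume a b :=
    ContinuousOn.intervalIntegrable (by fun_prop (disch := assumption))
  have hFTC : ∫ r in a..b, -(2 * √lam * (ψ r * ψ' r)) = √lam * (ψ a ^ 2 - ψ b ^ 2) := by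
    rw [intervalIntegral.integral_eq_sub_of_hasDerivAt_of_le hab (f := fun r => -(√lam * ψ r ^ 2))
      (uIcc_of_le hab ▸ by fun_prop)
      (fun r hr => (((hder r hr).fun_pow 2).const_mul √lam).neg.congr_deriv (by ring))
      (ContinuousOn.intervalIntegrable (by fun_prop))]
    ring
  rw [← hFTC]
  refine intervalIntegral.integral_mono_on hab (ContinuousOn.intervalIntegrable (by fun_prop)) hint
    fun r hr => ?_
  simpa [Real.sq_sqrt hlam] using neg_two_mul_mul_le_sq_mul_add_div (hpos r hr) √lam (ψ r) (ψ' r)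

theorem intervalIntegral_eq_of_eqOn_Ioc_zero {f : ℝ → ℝ} {a b c : ℝ} (hbc : b ≤ c)
    (hab : IntervalIntegrable f volume a b) (hf : EqOn f 0 (Ioc b c)) :
    ∫ x in a..c, f x = ∫ x in a..b, f x := by
  have hbc_int : IntervalIntegrable f volume b c :=
    (intervalIntegrable_iff_integrableOn_Ioc_of_le hbc).2
      ((integrableOn_congr_fun hf measurableSet_Ioc).2 integrableOn_zero)
  rw [← intervalIntegral.integral_add_adjacent_intervals hab hbc_int,
    intervalIntegral.integral_of_le hbc, setIntegral_eq_zero_of_forall_eq_zero hf, add_zero]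

theorem sqrt_le_integral_energy {R lam r₀ : ℝ} {h ψ ψ' : ℝ → ℝ} (hR : 0 < R)
    (hlam : 0 ≤ lam) (hc : ContinuousOn h (Ico 0 R)) (hpos : ∀ r ∈ Ico 0 R, 0 < h r)
    (hder : ∀ r ∈ Icc 0 R, HasDerivWithinAt ψ (ψ' r) (Icc 0 R) r)
    (hψ' : ContinuousOn ψ' (Icc 0 R)) (hψ0 : ψ 0 = 1) (hr₀ : r₀ < R)
    (hvan : ∀ r ∈ Icc r₀ R, ψ r = 0) :
    √lam ≤ ∫ r in (0 : ℝ)..R, ψ' r ^ 2 * h r + lam * ψ r ^ 2 / h r := by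
  have hr₀_pos : 0 < r₀ := by
    by_contra! hr₀_nonpos
    simpa [hψ0] using hvan 0 ⟨hr₀_nonpos, hR.le⟩
  have hsub : Icc 0 r₀ ⊆ Icc 0 R := Icc_subset_Icc_right hr₀.le
  have hψ'_zero : ∀ r ∈ Ioc r₀ R, ψ' r = 0 := by
    intro r hr
    have hmem : r ∈ Icc 0 R := ⟨hr₀_pos.le.trans hr.1.le, hr.2⟩
    have hloc : ψ =ᶠ[𝓝[Icc 0 R] r] fun _ => 0 := by
      filter_upwards [nhdsWithin_le_nhds (Ioi_mem_nhds hr.1), self_mem_nhdsWithin] with y hy hy'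
      exact hvan y ⟨(mem_Ioi.1 hy).le, hy'.2⟩
    exact (uniqueDiffOn_Icc hR r hmem).eq_deriv _ (hder r hmem)
      ((hasDerivWithinAt_const r _ 0).congr_of_eventuallyEq hloc (hvan r ⟨hr.1.le, hr.2⟩))
  have hψ : ContinuousOn ψ (Icc 0 r₀) := fun r hr =>
    ((hder r (hsub hr)).continuousWithinAt).mono hsub
  have hc₀ : ContinuousOn h (Icc 0 r₀) := hc.mono (Icc_subset_Ico_right hr₀)
  have hpos₀ : ∀ r ∈ Icc 0 r₀, 0 < h r := fun r hr => hpos r (Icc_subset_Ico_right hr₀ hr)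
  have hint : IntervalIntegrable (fun r => ψ' r ^ 2 * h r + lam * ψ r ^ 2 / h r) volume 0 r₀ := by
    refine ContinuousOn.intervalIntegrable ?_
    rw [uIcc_of_le hr₀_pos.le]
    exact ((hψ'.mono hsub).pow 2).mul hc₀ |>.add <|
      (continuousOn_const.mul (hψ.pow 2)).div hc₀ fun r hr => (hpos₀ r hr).ne'
  rw [intervalIntegral_eq_of_eqOn_Ioc_zero hr₀.le hint fun r hr => by
    simp [hψ'_zero r hr, hvan r ⟨hr.1.le, hr.2⟩]]
  simpa [hψ0, hvan r₀ ⟨le_rfl, hr₀.le⟩] using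
    sqrt_mul_sub_sq_le_integral hr₀_pos.le hlam hc₀ hpos₀ hψ
      (fun r hr => (hder r (hsub (Ioo_subset_Icc_self hr))).hasDerivAt
        (Icc_mem_nhds hr.1 (hr.2.trans hr₀))) (hψ'.mono hsub)

theorem exists_le_intervalIntegral_of_lintegral_eq_top {f : ℝ → ℝ} {a b : ℝ}
    (hf : ContinuousOn f (Ico a b)) (hf0 : ∀ x ∈ Ioo a b, 0 ≤ f x)
    (htop : ∫⁻ x in Ioo a b, ENNReal.ofReal (f x) = ⊤) (M : ℝ) :
    ∃ c ∈ Ioo a b, M ≤ ∫ x in a..c, f x := by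
  have hab : a < b := by
    by_contra! hba
    simp [Ioo_eq_empty_of_le hba] at htop
  obtain ⟨u, hu_mono, hu_mem, hu_lim⟩ := exists_seq_strictMono_tendsto' hab
  have hunion : ⋃ n, Ioo a (u n) = Ioo a b := by
    refine Subset.antisymm (iUnion_subset fun n => Ioo_subset_Ioo_right (hu_mem n).2.le)
      fun x hx => ?_
    obtain ⟨n, hn⟩ := (hu_lim.eventually (lt_mem_nhds hx.2)).exists
    exact mem_iUnion.2 ⟨n, hx.1, hn⟩
  have hdir : Monotone fun n => Ioo a (u n) := fun i j hij =>
    Ioo_subset_Ioo_right (hu_mono.monotone hij)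
  rw [← hunion, setLIntegral_iUnion_of_directed _ hdir.directed_le] at htop
  obtain ⟨n, hn⟩ := lt_iSup_iff.1 (htop ▸ ENNReal.ofReal_lt_top : ENNReal.ofReal M < _)
  refine ⟨u n, hu_mem n, ?_⟩
  have hsub : Icc a (u n) ⊆ Ico a b := Icc_subset_Ico_right (hu_mem n).2
  rw [← ofReal_integral_eq_lintegral_ofReal
    (((hf.mono hsub).integrableOn_Icc).mono_set Ioo_subset_Icc_self)
    (ae_restrict_of_forall_mem measurableSet_Ioo fun x hx => hf0 x ⟨hx.1, hx.2.trans (hu_mem n).2⟩),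
    ENNReal.ofReal_lt_ofReal_iff'] at hn
  rw [intervalIntegral.integral_of_le (hu_mem n).1.le, integral_Ioc_eq_integral_Ioo]
  exact hn.1.le

theorem ContinuousOn.exists_continuous_pos_eqOn_Icc {h : ℝ → ℝ} {a b : ℝ} (hab : a ≤ b)
    (hc : ContinuousOn h (Icc a b)) (hpos : ∀ r ∈ Icc a b, 0 < h r) :
    ∃ H : ℝ → ℝ, Continuous H ∧ (∀ r, 0 < H r) ∧ EqOn H h (Icc a b) :=
  ⟨fun r => h (projIcc a b hab r), hc.comp_continuous (by fun_prop) fun r => (projIcc a b hab r).2,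
    fun r => hpos _ (projIcc a b hab r).2, fun r hr => by simp [projIcc_of_mem _ hr]⟩

theorem integral_energy_comp_primitive {H S φ φ' : ℝ → ℝ} (lam R : ℝ) (hHpos : ∀ r, 0 < H r)
    (hS : ∀ r, HasDerivAt S (H r)⁻¹ r) (hHinv : Continuous fun r => (H r)⁻¹)
    (hφ : Continuous φ) (hφ' : Continuous φ') :
    ∫ r in (0 : ℝ)..R, (φ' (S r) * (H r)⁻¹) ^ 2 * H r + lam * φ (S r) ^ 2 / H r =
      ∫ s in S 0..S R, φ' s ^ 2 + lam * φ s ^ 2 := by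
  rw [← intervalIntegral.integral_comp_mul_deriv (fun r _ => hS r) hHinv.continuousOn
    (by fun_prop : Continuous fun s => φ' s ^ 2 + lam * φ s ^ 2)]
  refine intervalIntegral.integral_congr fun r _ => ?_
  have := (hHpos r).ne'
  simp only [Function.comp]
  field_simp

theorem hasDerivAt_max_zero_pow {n : ℕ} (hn : n ≠ 0) (u : ℝ) :
    HasDerivAt (fun v : ℝ => max v 0 ^ (n + 1)) ((n + 1) * max u 0 ^ n) u := by
  have off_zero : ∀ v ≠ (0 : ℝ),
      HasDerivAt (fun v : ℝ => max v 0 ^ (n + 1)) ((n + 1) * max v 0 ^ n) v := by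
    intro v hv
    rcases hv.lt_or_gt with hv | hv
    · have hzero : (fun w : ℝ => max w 0 ^ (n + 1)) =ᶠ[𝓝 v] fun _ => 0 := by
        filter_upwards [Iio_mem_nhds hv] with w hw
        simp [max_eq_right (mem_Iio.1 hw).le]
      simpa [max_eq_right hv.le, hn] using
        (hasDerivAt_const v (0 : ℝ)).congr_of_eventuallyEq hzero
    · have hid : (fun w : ℝ => max w 0 ^ (n + 1)) =ᶠ[𝓝 v] fun w => w ^ (n + 1) := by
        filter_upwards [Ioi_mem_nhds hv] with w hw
        rw [max_eq_left (mem_Ioi.1 hw).le]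
      simpa [max_eq_left hv.le] using (hasDerivAt_pow (n + 1) v).congr_of_eventuallyEq hid
  rcases eq_or_ne u 0 with rfl | hu
  · exact hasDerivAt_of_hasDerivAt_of_ne off_zero (by fun_prop) (by fun_prop)
  · exact off_zero u hu

theorem integral_one_sub_div_pow {T : ℝ} (hT : T ≠ 0) (n : ℕ) :
    ∫ s in (0 : ℝ)..T, (1 - s / T) ^ n = T / (n + 1) := by
  rw [intervalIntegral.integral_comp_div (fun s => (1 - s) ^ n) hT, div_self hT,
    intervalIntegral.integral_comp_sub_left (fun s => s ^ n)]
  simp [integral_pow]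
  field_simp

noncomputable def cutoffProfile (T : ℝ) (k : ℕ) (s : ℝ) : ℝ := max (1 - s / T) 0 ^ k

namespace cutoffProfile

variable {T : ℝ} {k n : ℕ}

@[simp]
theorem apply_zero : cutoffProfile T k 0 = 1 := by simp [cutoffProfile]

theorem eq_zero_of_le (hT : 0 < T) (hk : k ≠ 0) {s : ℝ} (hs : T ≤ s) : cutoffProfile T k s = 0 := by
  have : 1 - s / T ≤ 0 := by rw [sub_nonpos, le_div_iff₀ hT]; simpa using hs
  simp [cutoffProfile, max_eq_right this, hk]

theorem eq_pow_of_le (hT : 0 < T) {s : ℝ} (hs : s ≤ T) : cutoffProfile T k s = (1 - s / T) ^ k := by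
  have : 0 ≤ 1 - s / T := by rw [sub_nonneg, div_le_one hT]; exact hs
  simp [cutoffProfile, max_eq_left this]

@[fun_prop]
theorem continuous : Continuous (cutoffProfile T k) := by
  unfold cutoffProfile; fun_prop

theorem hasDerivAt (hn : n ≠ 0) (s : ℝ) :
    HasDerivAt (cutoffProfile T (n + 1)) (-((n + 1) / T) * cutoffProfile T n s) s := by
  have hchain := (hasDerivAt_max_zero_pow hn (1 - s / T)).comp s
    (((hasDerivAt_id s).div_const T).const_sub 1)
  unfold cutoffProfile
  exact hchain.congr_deriv (by ring)

theorem integral_energy (hT : 0 < T) (hn : n ≠ 0) (lam : ℝ) {U : ℝ} (hU : T ≤ U) :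
    ∫ s in (0 : ℝ)..U, (-((n + 1) / T) * cutoffProfile T n s) ^ 2 +
        lam * cutoffProfile T (n + 1) s ^ 2 =
      (n + 1) ^ 2 / (T * (2 * n + 1)) + lam * T / (2 * n + 3) := by
  rw [intervalIntegral_eq_of_eqOn_Ioc_zero hU (Continuous.intervalIntegrable (by fun_prop) _ _)
    fun s hs => by simp [eq_zero_of_le hT hn hs.1.le, eq_zero_of_le hT n.succ_ne_zero hs.1.le]]
  have hpow : EqOn (fun s => (-((n + 1) / T) * cutoffProfile T n s) ^ 2 +
        lam * cutoffProfile T (n + 1) s ^ 2)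
      (fun s => ((n + 1) / T) ^ 2 * (1 - s / T) ^ (2 * n) + lam * (1 - s / T) ^ (2 * n + 2))
      (uIcc 0 T) := fun s hs => by
    rw [uIcc_of_le hT.le] at hs
    simp only [eq_pow_of_le hT hs.2]; ring
  rw [intervalIntegral.integral_congr hpow,
    intervalIntegral.integral_add (Continuous.intervalIntegrable (by fun_prop) _ _)
      (Continuous.intervalIntegrable (by fun_prop) _ _),
    intervalIntegral.integral_const_mul, intervalIntegral.integral_const_mul,
    integral_one_sub_div_pow hT.ne', integral_one_sub_div_pow hT.ne']
  push_cast
  field_simp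
  ring

end cutoffProfile

theorem exists_admissible_energy_eq {R lam T : ℝ} {h : ℝ → ℝ} (hc : ContinuousOn h (Ico 0 R))
    (hpos : ∀ r ∈ Ico 0 R, 0 < h r)
    (hdiv : ∫⁻ r in Ioo 0 R, ENNReal.ofReal (1 / h r) = ⊤) (hT : 0 < T) {n : ℕ} (hn : n ≠ 0) :
    ∃ ψ ψ' : ℝ → ℝ,
      (∀ r ∈ Icc 0 R, HasDerivWithinAt ψ (ψ' r) (Icc 0 R) r) ∧
      ContinuousOn ψ' (Icc 0 R) ∧ ψ 0 = 1 ∧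
      (∃ r₀ < R, ∀ r ∈ Icc r₀ R, ψ r = 0) ∧
      ∫ r in (0 : ℝ)..R, ψ' r ^ 2 * h r + lam * ψ r ^ 2 / h r =
        (n + 1) ^ 2 / (T * (2 * n + 1)) + lam * T / (2 * n + 3) := by
  obtain ⟨b, hb, hTb⟩ := exists_le_intervalIntegral_of_lintegral_eq_top (f := fun r => 1 / h r)
    (continuousOn_const.div hc fun r hr => (hpos r hr).ne')
    (fun r hr => (one_div_pos.2 (hpos r (Ioo_subset_Ico_self hr))).le) hdiv T
  have hsub : Icc 0 b ⊆ Ico 0 R := Icc_subset_Ico_right hb.2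
  -- `h` may degenerate at `R`, but `ψ` vanishes beyond `b`, so `h` only matters on `[0, b]`.
  obtain ⟨H, hH, hHpos, hHh⟩ :=
    (hc.mono hsub).exists_continuous_pos_eqOn_Icc hb.1.le fun r hr => hpos r (hsub hr)
  have hHinv : Continuous fun r => (H r)⁻¹ := hH.inv₀ fun r => (hHpos r).ne'
  set S : ℝ → ℝ := fun r => ∫ t in (0 : ℝ)..r, (H t)⁻¹
  have hS : ∀ r, HasDerivAt S (H r)⁻¹ r := fun r =>
    (hHinv.integral_hasStrictDerivAt 0 r).hasDerivAt
  have hScont : Continuous S := continuous_iff_continuousAt.2 fun r => (hS r).continuousAt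
  have hST : ∀ r, b ≤ r → T ≤ S r := by
    have hSmono : Monotone S := monotone_of_deriv_nonneg (fun r => (hS r).differentiableAt)
      fun r => (hS r).deriv ▸ (inv_pos.2 (hHpos r)).le
    have hSb : S b = ∫ t in (0 : ℝ)..b, 1 / h t :=
      intervalIntegral.integral_congr fun t ht => by
        simp [hHh (uIcc_of_le hb.1.le ▸ ht)]
    exact fun r hr => hTb.trans (hSb ▸ hSmono hr)
  set φ' : ℝ → ℝ := fun s => -((n + 1) / T) * cutoffProfile T n s
  refine ⟨fun r => cutoffProfile T (n + 1) (S r), fun r => φ' (S r) * (H r)⁻¹,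
    fun r _ => ((cutoffProfile.hasDerivAt hn (S r)).comp r (hS r)).hasDerivWithinAt,
    (by fun_prop : Continuous _).continuousOn, by simp [S],
    ⟨b, hb.2, fun r hr => cutoffProfile.eq_zero_of_le hT n.succ_ne_zero (hST r hr.1)⟩, ?_⟩
  have hdens : EqOn (fun r => (φ' (S r) * (H r)⁻¹) ^ 2 * h r +
        lam * cutoffProfile T (n + 1) (S r) ^ 2 / h r)
      (fun r => (φ' (S r) * (H r)⁻¹) ^ 2 * H r + lam * cutoffProfile T (n + 1) (S r) ^ 2 / H r)
      (uIcc 0 R) := by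
    intro r hr
    rw [uIcc_of_le (hb.1.trans hb.2).le] at hr
    rcases le_or_gt r b with hrb | hbr
    · simp only [hHh ⟨hr.1, hrb⟩]
    · simp [φ', cutoffProfile.eq_zero_of_le hT hn (hST r hbr.le),
        cutoffProfile.eq_zero_of_le hT n.succ_ne_zero (hST r hbr.le)]
  rw [intervalIntegral.integral_congr hdens,
    integral_energy_comp_primitive lam R hHpos hS hHinv (by fun_prop) (by fun_prop),
    show S 0 = 0 from intervalIntegral.integral_same]
  exact cutoffProfile.integral_energy hT hn lam (hST R hb.2.le)

theorem exists_admissible_energy_lt {R lam w : ℝ} {h : ℝ → ℝ} (hlam : 0 < lam)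
    (hc : ContinuousOn h (Ico 0 R)) (hpos : ∀ r ∈ Ico 0 R, 0 < h r)
    (hdiv : ∫⁻ r in Ioo 0 R, ENNReal.ofReal (1 / h r) = ⊤) (hw : √lam < w) :
    ∃ ψ ψ' : ℝ → ℝ,
      (∀ r ∈ Icc 0 R, HasDerivWithinAt ψ (ψ' r) (Icc 0 R) r) ∧
      ContinuousOn ψ' (Icc 0 R) ∧ ψ 0 = 1 ∧
      (∃ r₀ < R, ∀ r ∈ Icc r₀ R, ψ r = 0) ∧
      ∫ r in (0 : ℝ)..R, ψ' r ^ 2 * h r + lam * ψ r ^ 2 / h r < w := by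
  have hs : 0 < √lam := Real.sqrt_pos.2 hlam
  obtain ⟨n, hn⟩ := exists_nat_gt (√lam / (w - √lam))
  have hn_pos : 0 < n := by exact_mod_cast (div_pos hs (sub_pos.2 hw)).trans hn
  obtain ⟨ψ, ψ', hder, hψ', hψ0, hvan, henergy⟩ := exists_admissible_energy_eq (lam := lam) hc hpos
    hdiv (div_pos n.cast_add_one_pos hs) hn_pos.ne'
  refine ⟨ψ, ψ', hder, hψ', hψ0, hvan, henergy ▸ ?_⟩
  have hvalue : ((n : ℝ) + 1) ^ 2 / ((n + 1) / √lam * (2 * n + 1)) +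
      lam * ((n + 1) / √lam) / (2 * n + 3) = √lam + √lam / ((2 * n + 1) * (2 * n + 3)) := by
    field_simp
    linear_combination -(2 * (n : ℝ) + 1) * (n + 1) * Real.sq_sqrt hlam.le
  rw [div_lt_iff₀ (sub_pos.2 hw)] at hn
  have hn_one : (1 : ℝ) ≤ n := by exact_mod_cast hn_pos
  have herror : √lam / ((2 * n + 1) * (2 * n + 3)) < w - √lam := by
    rw [div_lt_iff₀ (by positivity)]
    nlinarith
  rw [hvalue]
  linarith

/-- The infimum of the reduced Rayleigh energy ∫(ψ'²h + λψ²/h) over C¹ test functions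
with ψ(0) = 1 vanishing near the pole equals √λ, when ∫₀^R dr/h = +∞. -/
theorem stmt_16 (R lam : ℝ) (hR : 0 < R) (hlam : 0 < lam)
    (h : ℝ → ℝ) (hc : ContinuousOn h (Set.Ico 0 R))
    (hpos : ∀ r ∈ Set.Ico (0:ℝ) R, 0 < h r)
    (hdiv : ∫⁻ r in Set.Ioo (0:ℝ) R, ENNReal.ofReal (1 / h r) = ⊤) :
    sInf {x : ℝ | ∃ ψ ψ' : ℝ → ℝ,
        (∀ r ∈ Set.Icc (0:ℝ) R, HasDerivWithinAt ψ (ψ' r) (Set.Icc 0 R) r) ∧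
        ContinuousOn ψ' (Set.Icc 0 R) ∧ ψ 0 = 1 ∧
        (∃ r₀ < R, ∀ r ∈ Set.Icc r₀ R, ψ r = 0) ∧
        x = ∫ r in (0:ℝ)..R, (ψ' r) ^ 2 * h r + lam * (ψ r) ^ 2 / h r}
      = Real.sqrt lam := by
  refine csInf_eq_of_forall_ge_of_forall_gt_exists_lt ?_ ?_ fun w hw => ?_
  · obtain ⟨ψ, ψ', hder, hψ', hψ0, hvan, -⟩ :=
      exists_admissible_energy_lt hlam hc hpos hdiv (lt_add_one √lam)
    exact ⟨_, ψ, ψ', hder, hψ', hψ0, hvan, rfl⟩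
  · rintro x ⟨ψ, ψ', hder, hψ', hψ0, ⟨r₀, hr₀, hvan⟩, rfl⟩
    exact sqrt_le_integral_energy hR hlam.le hc hpos hder hψ' hψ0 hr₀ hvan
  · obtain ⟨ψ, ψ', hder, hψ', hψ0, hvan, hlt⟩ := exists_admissible_energy_lt hlam hc hpos hdiv hw
    exact ⟨_, ⟨ψ, ψ', hder, hψ', hψ0, hvan, rfl⟩, hlt⟩
end

section
/- Let n ≥ 3 and p ≥ 0 be integers with 2p ≤ n−3, let L ≥ 1, λ ≥ 0, and let h : [0,L] → ℝ be continuous with h(r) ≥ 0 for all r ∈ [0,L] and h(r) ≥ 1−r for all r ∈ [0,1]. Then for every continuously differentiable α : [0,L] → ℝ, ∫₀^L ( α'(r)²·h(r)^{n−2p−1} + λ·α(r)²·h(r)^{n−2p−3} ) dr ≥ ∫₀^1 ( α'(r)²·(1−r)^{n−2p−1} + λ·α(r)²·(1−r)^{n−2p−3} ) dr. -/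
open MeasureTheory Set

/-! Since the exponents `n - 2p - 1` and `n - 2p - 3` are nonnegative, the integrand is monotone in
the warping function. So `h ≥ 1 - r` makes the warped integrand dominate the ball integrand on
`[0, 1]`, and on `[1, L]` the warped integrand is nonnegative. -/

/-- Integrand of the reduced Rayleigh quotient at a point `r`, with `a = α'(r)`, `b = α(r)` and
`w = h(r)`. -/
noncomputable def warpedEnergyDensity (e₁ e₂ : ℤ) (lam a b w : ℝ) : ℝ :=
  a ^ 2 * w ^ e₁ + lam * b ^ 2 * w ^ e₂

section warpedEnergyDensity

variable {e₁ e₂ : ℤ} {lam a b v w : ℝ}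

theorem warpedEnergyDensity_nonneg (hlam : 0 ≤ lam) (hw : 0 ≤ w) :
    0 ≤ warpedEnergyDensity e₁ e₂ lam a b w := by
  unfold warpedEnergyDensity
  have := zpow_nonneg hw e₁
  have := zpow_nonneg hw e₂
  positivity

theorem warpedEnergyDensity_le_of_le (he₁ : 0 ≤ e₁) (he₂ : 0 ≤ e₂) (hlam : 0 ≤ lam)
    (hv : 0 ≤ v) (hvw : v ≤ w) :
    warpedEnergyDensity e₁ e₂ lam a b v ≤ warpedEnergyDensity e₁ e₂ lam a b w := by
  unfold warpedEnergyDensity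
  gcongr
  · exact zpow_le_zpow_left₀ he₁ hv hvw
  · exact zpow_le_zpow_left₀ he₂ hv hvw

theorem ContinuousOn.warpedEnergyDensity {s : Set ℝ} {α α' w : ℝ → ℝ} (he₁ : 0 ≤ e₁)
    (he₂ : 0 ≤ e₂) (hα : ContinuousOn α s) (hα' : ContinuousOn α' s) (hw : ContinuousOn w s) :
    ContinuousOn (fun r => warpedEnergyDensity e₁ e₂ lam (α' r) (α r) (w r)) s :=
  ((hα'.pow 2).mul (hw.zpow₀ e₁ fun _ _ => .inr he₁)).add
    ((continuousOn_const.mul (hα.pow 2)).mul (hw.zpow₀ e₂ fun _ _ => .inr he₂))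

end warpedEnergyDensity

theorem intervalIntegral.integral_le_integral_of_le_of_nonneg_tail {f g : ℝ → ℝ} {a b c : ℝ}
    {μ : Measure ℝ} (hab : a ≤ b) (hbc : b ≤ c) (hf : IntervalIntegrable f μ a c)
    (hg : IntervalIntegrable g μ a b) (hgf : ∀ x ∈ Icc a b, g x ≤ f x)
    (hf₀ : ∀ x ∈ Icc b c, 0 ≤ f x) :
    ∫ x in a..b, g x ∂μ ≤ ∫ x in a..c, f x ∂μ := by
  have hf_ab : IntervalIntegrable f μ a b :=
    hf.mono_set (by simp only [uIcc_of_le hab, uIcc_of_le (hab.trans hbc)]; gcongr)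
  have hf_bc : IntervalIntegrable f μ b c :=
    hf.mono_set (by simp only [uIcc_of_le hbc, uIcc_of_le (hab.trans hbc)]; gcongr)
  rw [← integral_add_adjacent_intervals hf_ab hf_bc]
  have head := integral_mono_on hab hg hf_ab hgf
  have tail := integral_nonneg (μ := μ) hbc hf₀
  linarith

theorem stmt_19_general
    (n p : ℤ) (hpn : 2 * p ≤ n - 3)
    (L : ℝ) (hL : 1 ≤ L) (lam : ℝ) (hlam : 0 ≤ lam)
    (h : ℝ → ℝ) (hc : ContinuousOn h (Set.Icc 0 L))
    (hnn : ∀ r ∈ Set.Icc (0:ℝ) L, 0 ≤ h r)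
    (hlb : ∀ r ∈ Set.Icc (0:ℝ) 1, 1 - r ≤ h r)
    (α α' : ℝ → ℝ)
    (ader : ∀ r ∈ Set.Icc (0:ℝ) L, HasDerivWithinAt α (α' r) (Set.Icc 0 L) r)
    (acont : ContinuousOn α' (Set.Icc 0 L)) :
    (∫ r in (0:ℝ)..L,
        (α' r) ^ 2 * h r ^ (n - 2 * p - 1) + lam * (α r) ^ 2 * h r ^ (n - 2 * p - 3))
      ≥ ∫ r in (0:ℝ)..1,
          (α' r) ^ 2 * (1 - r) ^ (n - 2 * p - 1)
            + lam * (α r) ^ 2 * (1 - r) ^ (n - 2 * p - 3) := by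
  have he₁ : 0 ≤ n - 2 * p - 1 := by omega
  have he₂ : 0 ≤ n - 2 * p - 3 := by omega
  have hαc : ContinuousOn α (Icc 0 L) := fun r hr => (ader r hr).continuousWithinAt
  have hIcc : Icc (0:ℝ) 1 ⊆ Icc 0 L := Icc_subset_Icc_right hL
  show ∫ r in (0:ℝ)..1, warpedEnergyDensity _ _ lam (α' r) (α r) (1 - r)
      ≤ ∫ r in (0:ℝ)..L, warpedEnergyDensity _ _ lam (α' r) (α r) (h r)
  refine intervalIntegral.integral_le_integral_of_le_of_nonneg_tail zero_le_one hL ?_ ?_ ?_ ?_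
  · exact (hαc.warpedEnergyDensity he₁ he₂ acont hc).intervalIntegrable_of_Icc
      (zero_le_one.trans hL)
  · exact ((hαc.mono hIcc).warpedEnergyDensity he₁ he₂ (acont.mono hIcc)
      (continuousOn_const.sub continuousOn_id)).intervalIntegrable_of_Icc zero_le_one
  · exact fun r hr => warpedEnergyDensity_le_of_le he₁ he₂ hlam (by linarith [hr.2]) (hlb r hr)
  · exact fun r hr => warpedEnergyDensity_nonneg hlam (hnn r ⟨zero_le_one.trans hr.1, hr.2⟩)

/-- Rayleigh quotient comparison with the Euclidean unit ball (Theorem 1.6(i)):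
if h ≥ 0 on [0,L] and h(r) ≥ 1-r on [0,1], with 2p ≤ n-3, the warped energy dominates
the ball energy of the same radial test function. -/
theorem stmt_19
    (n p : ℤ) (hn : 3 ≤ n) (hp : 0 ≤ p) (hpn : 2 * p ≤ n - 3)
    (L : ℝ) (hL : 1 ≤ L) (lam : ℝ) (hlam : 0 ≤ lam)
    (h : ℝ → ℝ) (hc : ContinuousOn h (Set.Icc 0 L))
    (hnn : ∀ r ∈ Set.Icc (0:ℝ) L, 0 ≤ h r)
    (hlb : ∀ r ∈ Set.Icc (0:ℝ) 1, 1 - r ≤ h r)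
    (α α' : ℝ → ℝ)
    (ader : ∀ r ∈ Set.Icc (0:ℝ) L, HasDerivWithinAt α (α' r) (Set.Icc 0 L) r)
    (acont : ContinuousOn α' (Set.Icc 0 L)) :
    (∫ r in (0:ℝ)..L,
        (α' r) ^ 2 * h r ^ (n - 2 * p - 1) + lam * (α r) ^ 2 * h r ^ (n - 2 * p - 3))
      ≥ ∫ r in (0:ℝ)..1,
          (α' r) ^ 2 * (1 - r) ^ (n - 2 * p - 1)
            + lam * (α r) ^ 2 * (1 - r) ^ (n - 2 * p - 3) :=
  stmt_19_general n p hpn L hL lam hlam h hc hnn hlb α α' ader acont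
end
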